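/- arXiv:2408.12688 — 5 statements merged into one kernel-verified Lean document; each statement's English description precedes it below -/
import Mathlib

section
/- Let f: X → X be a continuum-wise expansive homeomorphism of a compact metric space (X,d). Suppose that for each n ∈ ℕ there is a pair (S_n, U_n) of non-trivial subcontinua of X with S_n stable (diam(f^k(S_n)) → 0 as k → ∞) and U_n unstable (diam(f^{-k}(U_n)) → 0 as k → ∞), such that (1) d_H(S_n, U_n) → 0 as n → ∞, and (2) there exists r > 0 with diam(S_n) > r and diam(U_n) > r for every n ∈ ℕ. Then the induced map C(f) on the hyperspace of continua C(X) does not have the shadowing property. -/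
open Set Metric Filter Function

/-- The `n`-th iterate over `ℤ` of the invertible system with forward map `g`
and backward map `ginv`. -/
def iterZ {X : Type*} (g ginv : X → X) : ℤ → X → X
  | Int.ofNat n => g^[n]
  | Int.negSucc n => ginv^[n + 1]

/-- Two-sided shadowing property for an invertible system `(g, ginv)`. -/
def ShadowingZ {X : Type*} [MetricSpace X] (g ginv : X → X) : Prop :=
  ∀ ε > 0, ∃ δ > 0, ∀ x : ℤ → X,
    (∀ n : ℤ, dist (g (x n)) (x (n + 1)) < δ) →
      ∃ y : X, ∀ n : ℤ, dist (iterZ g ginv n y) (x n) < ε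

/-- One-sided shadowing property for a map `g`. -/
def ShadowingN {X : Type*} [MetricSpace X] (g : X → X) : Prop :=
  ∀ ε > 0, ∃ δ > 0, ∀ x : ℕ → X,
    (∀ n : ℕ, dist (g (x n)) (x (n + 1)) < δ) →
      ∃ y : X, ∀ n : ℕ, dist (g^[n] y) (x n) < ε

/-- The hyperspace of (nonempty) subcontinua of `X`, with the Hausdorff metric. -/
abbrev Continua (X : Type*) [MetricSpace X] : Type _ :=
  {A : TopologicalSpace.NonemptyCompacts X // IsConnected (A : Set X)}

/-- The induced map `C(f)` on the hyperspace of continua. -/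
def inducedC {X : Type*} [MetricSpace X] (f : X → X) (hf : Continuous f) :
    Continua X → Continua X := fun A =>
  ⟨⟨⟨f '' (A.1 : Set X), A.1.isCompact.image hf⟩, A.1.nonempty.image f⟩,
    A.2.image f hf.continuousOn⟩

/-- The `c`-stable set of `x` for the map `g`. -/
def Ws {X : Type*} [MetricSpace X] (g : X → X) (c : ℝ) (x : X) : Set X :=
  {y | ∀ k : ℕ, dist (g^[k] y) (g^[k] x) ≤ c}

/-- Topological transitivity. -/
def TransitiveMap {X : Type*} [TopologicalSpace X] (g : X → X) : Prop :=
  ∀ U V : Set X, IsOpen U → IsOpen V → U.Nonempty → V.Nonempty →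
    ∃ n : ℕ, ((g^[n] '' U) ∩ V).Nonempty

/-- `A` is a quasi-attractor of `g`. -/
def QuasiAttractor {X : Type*} [TopologicalSpace X] (g : X → X) (A : Set X) : Prop :=
  IsCompact A ∧ g '' A = A ∧
    ∀ U : Set X, IsOpen U → A ⊆ U →
      ∃ V : Set X, IsOpen V ∧ A ⊆ V ∧ V ⊆ U ∧ closure (g '' V) ⊆ V

/-- `A` is a quasi-attractor of the restriction of `g` to the invariant set `s`. -/
def QuasiAttractorOn {X : Type*} [TopologicalSpace X] (g : X → X) (s A : Set X) : Prop :=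
  IsCompact A ∧ A ⊆ s ∧ g '' A = A ∧
    ∀ U : Set X, IsOpen U → A ⊆ U →
      ∃ V : Set X, IsOpen V ∧ A ⊆ V ∧ V ∩ s ⊆ U ∧ closure (g '' (V ∩ s)) ∩ s ⊆ V

/-- Shadowing property for the restriction of the invertible system `(g, ginv)`
to an invariant set `s`. -/
def ShadowingZOn {X : Type*} [MetricSpace X] (g ginv : X → X) (s : Set X) : Prop :=
  ∀ ε > 0, ∃ δ > 0, ∀ x : ℤ → X, (∀ n : ℤ, x n ∈ s) →
    (∀ n : ℤ, dist (g (x n)) (x (n + 1)) < δ) →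
      ∃ y ∈ s, ∀ n : ℤ, dist (iterZ g ginv n y) (x n) < ε

/-- `(X, f)` is a simple dynamical system with quasi-attractor fixed point `p`
and quasi-repeller fixed point `q`. -/
def SimpleSystem {X : Type*} [MetricSpace X] (f : X ≃ₜ X) (p q : X) : Prop :=
  f p = p ∧ f q = q ∧ QuasiAttractor ⇑f {p} ∧ QuasiAttractor ⇑f.symm {q} ∧
    ∀ x : X, x ≠ p → x ≠ q →
      Tendsto (fun n : ℕ => (⇑f)^[n] x) atTop (nhds p) ∧
      Tendsto (fun n : ℕ => (⇑f.symm)^[n] x) atTop (nhds q)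

/-!
Shadowing glues the backward orbit of `U N` to the forward orbit of `S N` (these are `δ`-close
for large `N`) into a continuum `A` whose forward iterates stay `ε`-close to those of `S N` and
whose backward iterates stay `ε`-close to those of `U N`. Hence `A` has diameter at least
`r - 2ε > 0`, while all but finitely many of its iterates have diameter at most `c`. By uniform
continuity of the remaining finitely many iterates, a small non-trivial subcontinuum of `A` through
a point `a`, which exists by boundary bumping, lies in the dynamical ball `Γ_c(a)`, contradicting
cw-expansivity.
-/

theorem exists_isClopen_mem_subset_of_connectedComponent_subset {Z : Type*} [TopologicalSpace Z]
    [T2Space Z] [CompactSpace Z] {z : Z} {U : Set Z} (hU : IsOpen U)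
    (h : connectedComponent z ⊆ U) : ∃ V, IsClopen V ∧ z ∈ V ∧ V ⊆ U := by
  have hdir : Directed (· ⊇ ·) fun V : {V : Set Z // IsClopen V ∧ z ∈ V} => V.1 :=
    fun V W =>
      ⟨⟨V.1 ∩ W.1, V.2.1.inter W.2.1, V.2.2, W.2.2⟩, inter_subset_left, inter_subset_right⟩
  have : Nonempty {V : Set Z // IsClopen V ∧ z ∈ V} := ⟨⟨univ, isClopen_univ, mem_univ z⟩⟩
  rw [connectedComponent_eq_iInter_isClopen] at h
  obtain ⟨⟨V, hV, hzV⟩, hVU⟩ := exists_subset_nhds_of_compactSpace hdir (fun V => V.2.1.isClosed)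
    fun x hx => hU.mem_nhds (h hx)
  exact ⟨V, hV, hzV, hVU⟩

section

variable {X : Type*} [MetricSpace X]

/-- Boundary bumping, in its weakest form: if the component of `a` were `{a}`, a clopen piece of
`A ∩ closedBall a s` around `a` inside the open ball would be clopen in `A`. -/
theorem connectedComponentIn_inter_closedBall_nontrivial {A : Set X} (hA : IsCompact A)
    (hAc : IsConnected A) {a b : X} (ha : a ∈ A) (hb : b ∈ A) {s : ℝ} (hs : 0 < s)
    (hsb : s < dist a b) : (connectedComponentIn (A ∩ closedBall a s) a).Nontrivial := by
  set D := A ∩ closedBall a s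
  have haD : a ∈ D := ⟨ha, mem_closedBall_self hs.le⟩
  by_contra htriv
  have hcomp : connectedComponent (⟨a, haD⟩ : D) ⊆ Subtype.val ⁻¹' ball a s := by
    intro x hx
    have hxa : x.1 = a := (not_nontrivial_iff.1 htriv)
      (by rw [connectedComponentIn_eq_image haD]; exact mem_image_of_mem _ hx)
      (mem_connectedComponentIn haD)
    simp [hxa, hs]
  have : CompactSpace D := isCompact_iff_compactSpace.1 (hA.inter_right isClosed_closedBall)
  obtain ⟨V, hV, haV, hVball⟩ := exists_isClopen_mem_subset_of_connectedComponent_subset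
    (isOpen_ball.preimage continuous_subtype_val) hcomp
  obtain ⟨O, hO, rfl⟩ := isOpen_induced_iff.1 hV.isOpen
  set W := Subtype.val '' (Subtype.val ⁻¹' O : Set D)
  have hWclosed : IsClosed W := (hV.isClosed.isCompact.image continuous_subtype_val).isClosed
  have hcover : A ⊆ (O ∩ ball a s) ∪ Wᶜ := by
    intro x _
    by_cases hx : x ∈ W
    · obtain ⟨y, hyO, rfl⟩ := hx
      exact Or.inl ⟨hyO, hVball hyO⟩
    · exact Or.inr hx
  have hbW : b ∉ W := by
    rintro ⟨y, hyO, rfl⟩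
    have := mem_ball'.1 (hVball hyO)
    linarith
  obtain ⟨x, hxA, ⟨hxO, hxball⟩, hxW⟩ := hAc.isPreconnected _ _ (hO.inter isOpen_ball)
    hWclosed.isOpen_compl hcover ⟨a, ha, haV, mem_ball_self hs⟩ ⟨b, hb, hbW⟩
  exact hxW ⟨⟨x, hxA, ball_subset_closedBall hxball⟩, hxO, rfl⟩

theorem Metric.NonemptyCompacts.diam_le_of_dist_lt
    {A B : TopologicalSpace.NonemptyCompacts X} {e : ℝ} (h : dist A B < e) :
    diam (A : Set X) ≤ diam (B : Set X) + 2 * e := by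
  rw [NonemptyCompacts.dist_eq] at h
  have hfin := hausdorffEDist_ne_top_of_nonempty_of_bounded A.nonempty B.nonempty
    A.isCompact.isBounded B.isCompact.isBounded
  have he : 0 ≤ diam (B : Set X) + 2 * e := by
    linarith [hausdorffDist_nonneg.trans_lt h, diam_nonneg (s := (B : Set X))]
  refine diam_le_of_forall_dist_le he fun x hx y hy => ?_
  obtain ⟨x', hx', hxx'⟩ := exists_dist_lt_of_hausdorffDist_lt hx h hfin
  obtain ⟨y', hy', hyy'⟩ := exists_dist_lt_of_hausdorffDist_lt hy h hfin
  calc dist x y ≤ dist x x' + dist x' y' + dist y' y := dist_triangle4 x x' y' y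
    _ ≤ e + diam (B : Set X) + e := by
      gcongr
      · exact dist_le_diam_of_mem B.isCompact.isBounded hx' hy'
      · rw [dist_comm]; exact hyy'.le
    _ = diam (B : Set X) + 2 * e := by ring

theorem exists_pos_forall_mem_Ws_of_eventually_diam_le {g : X → X} (hg : Continuous g)
    {A : Set X} (hA : IsCompact A) {c : ℝ} (hc : 0 < c)
    (hdiam : ∀ᶠ k in atTop, diam (g^[k] '' A) ≤ c) :
    ∃ δ > 0, ∀ a ∈ A, ∀ y ∈ A, dist y a < δ → y ∈ Ws g c a := by
  obtain ⟨K, hK⟩ := eventually_atTop.1 hdiam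
  have : CompactSpace A := isCompact_iff_compactSpace.1 hA
  have hequi : UniformEquicontinuous fun (k : Fin K) (x : A) => g^[k] x :=
    CompactSpace.uniformEquicontinuous_of_equicontinuous
      (equicontinuous_finite.2 fun k => (hg.iterate k).comp continuous_subtype_val)
  obtain ⟨δ, hδ, hclose⟩ := Metric.uniformEquicontinuous_iff.1 hequi c hc
  refine ⟨δ, hδ, fun a ha y hy hya k => ?_⟩
  rcases lt_or_ge k K with hk | hk
  · exact (hclose ⟨y, hy⟩ ⟨a, ha⟩ hya ⟨k, hk⟩).le
  · exact (dist_le_diam_of_mem (hA.image (hg.iterate k)).isBounded (mem_image_of_mem _ hy)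
      (mem_image_of_mem _ ha)).trans (hK k hk)

theorem exists_not_isTotallyDisconnected_Ws_inter_Ws {g h : X → X} (hg : Continuous g)
    (hh : Continuous h) {A : Set X} (hA : IsCompact A) (hAc : IsConnected A)
    (hAnt : A.Nontrivial) {c : ℝ} (hc : 0 < c)
    (hfwd : ∀ᶠ k in atTop, diam (g^[k] '' A) ≤ c) (hbwd : ∀ᶠ k in atTop, diam (h^[k] '' A) ≤ c) :
    ∃ x, ¬ IsTotallyDisconnected (Ws g c x ∩ Ws h c x) := by
  obtain ⟨δ₁, hδ₁, hg_close⟩ := exists_pos_forall_mem_Ws_of_eventually_diam_le hg hA hc hfwd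
  obtain ⟨δ₂, hδ₂, hh_close⟩ := exists_pos_forall_mem_Ws_of_eventually_diam_le hh hA hc hbwd
  obtain ⟨a, ha, b, hb, hab⟩ := hAnt
  obtain ⟨s, hs, hs_lt⟩ := exists_between (lt_min (lt_min hδ₁ hδ₂) (dist_pos.2 hab))
  obtain ⟨hsδ, hsab⟩ := lt_min_iff.1 hs_lt
  set B := connectedComponentIn (A ∩ closedBall a s) a
  refine ⟨a, fun hTD => (hTD B ?_ isPreconnected_connectedComponentIn).not_nontrivial
    (connectedComponentIn_inter_closedBall_nontrivial hA hAc ha hb hs hsab)⟩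
  intro y hy
  obtain ⟨hyA, hya⟩ := connectedComponentIn_subset _ _ hy
  have hya : dist y a < min δ₁ δ₂ := (mem_closedBall.1 hya).trans_lt hsδ
  exact ⟨hg_close a ha y hyA (hya.trans_le (min_le_left _ _)),
    hh_close a ha y hyA (hya.trans_le (min_le_right _ _))⟩

theorem coe_iterate_inducedC (g : X → X) (hg : Continuous g) (k : ℕ) (A : Continua X) :
    (((inducedC g hg)^[k] A).1 : Set X) = g^[k] '' (A.1 : Set X) := by
  induction k with
  | zero => simp
  | succ k ih =>
    rw [iterate_succ_apply', iterate_succ', image_comp, ← ih]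
    rfl

theorem inducedC_rightInverse (f : X ≃ₜ X) :
    RightInverse (inducedC f.symm f.symm.continuous) (inducedC f f.continuous) := fun A =>
  Subtype.ext <| TopologicalSpace.NonemptyCompacts.ext <| f.image_symm_image (A.1 : Set X)

end

section iterZ

variable {Y : Type*} {g ginv : Y → Y}

theorem iterZ_natCast (k : ℕ) : iterZ g ginv k = g^[k] := rfl

theorem iterZ_neg_natCast (k : ℕ) : iterZ g ginv (-k) = ginv^[k] := by
  cases k <;> rfl

theorem iterZ_add_one (hinv : RightInverse ginv g) (n : ℤ) (y : Y) :
    g (iterZ g ginv n y) = iterZ g ginv (n + 1) y := by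
  rcases n with k | _ | k
  · exact (iterate_succ_apply' g k y).symm
  · exact hinv y
  · show g (ginv^[k + 2] y) = ginv^[k + 1] y
    rw [iterate_succ_apply']
    exact hinv _

end iterZ

theorem ShadowingZ.exists_shadow_of_dist_lt {Y : Type*} [MetricSpace Y] {g ginv : Y → Y}
    (hsh : ShadowingZ g ginv) (hinv : RightInverse ginv g) {ε : ℝ} (hε : 0 < ε) :
    ∃ δ > 0, ∀ u s : Y, dist u s < δ → ∃ y : Y,
      (∀ k : ℕ, dist (g^[k] y) (g^[k] s) < ε) ∧
      ∀ k : ℕ, 0 < k → dist (ginv^[k] y) (ginv^[k] u) < ε := by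
  obtain ⟨δ, hδ, hshadow⟩ := hsh ε hε
  refine ⟨δ, hδ, fun u s hus => ?_⟩
  -- a `δ`-pseudo-orbit whose only jump, from `n = -1` to `n = 0`, has size `dist u s`
  set x : ℤ → Y := fun n => iterZ g ginv n (if 0 ≤ n then s else u)
  have hx : ∀ n, dist (g (x n)) (x (n + 1)) < δ := by
    intro n
    rcases lt_trichotomy n (-1) with hn | rfl | hn
    · simp [x, iterZ_add_one hinv, show ¬ 0 ≤ n by omega, show ¬ 0 ≤ n + 1 by omega, hδ]
    · exact (congrArg (dist · s) (hinv u)).trans_lt hus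
    · simp [x, iterZ_add_one hinv, show 0 ≤ n by omega, show 0 ≤ n + 1 by omega, hδ]
  obtain ⟨y, hy⟩ := hshadow x hx
  refine ⟨y, fun k => by simpa [x, iterZ_natCast] using hy k, fun k hk => ?_⟩
  simpa [x, iterZ_neg_natCast, hk.ne'] using hy (-k)

theorem stmt0_general {X : Type*} [MetricSpace X] [CompactSpace X] (f : X ≃ₜ X)
    (hcw : ∃ c > 0, ∀ x : X, IsTotallyDisconnected (Ws ⇑f c x ∩ Ws ⇑f.symm c x))
    (S U : ℕ → Continua X)
    (hSst : ∀ n, Tendsto (fun k : ℕ => Metric.diam ((⇑f)^[k] '' ((S n).1 : Set X)))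
      atTop (nhds 0))
    (hUun : ∀ n, Tendsto (fun k : ℕ => Metric.diam ((⇑f.symm)^[k] '' ((U n).1 : Set X)))
      atTop (nhds 0))
    (hd : Tendsto (fun n : ℕ => dist (S n) (U n)) atTop (nhds 0))
    (r : ℝ) (hr : 0 < r)
    (hSdiam : ∀ n, r < Metric.diam ((S n).1 : Set X)) :
    ¬ ShadowingZ (inducedC ⇑f f.continuous) (inducedC ⇑f.symm f.symm.continuous) := by
  obtain ⟨c, hc, hTD⟩ := hcw
  intro hSh
  obtain ⟨ε, hε, hεr, hεc⟩ : ∃ ε > 0, ε ≤ r / 4 ∧ ε ≤ c / 4 :=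
    ⟨min (r / 4) (c / 4), by positivity, min_le_left _ _, min_le_right _ _⟩
  obtain ⟨δ, hδ, hglue⟩ := hSh.exists_shadow_of_dist_lt (inducedC_rightInverse f) hε
  obtain ⟨N, hN⟩ := (hd.eventually (gt_mem_nhds hδ)).exists
  obtain ⟨A, hAS, hAU⟩ := hglue (U N) (S N) (by rwa [dist_comm])
  have hAnt : (A.1 : Set X).Nontrivial := by
    have hdiam := NonemptyCompacts.diam_le_of_dist_lt (dist_comm A (S N) ▸ hAS 0)
    by_contra htriv
    rw [diam_subsingleton (not_nontrivial_iff.1 htriv)] at hdiam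
    linarith [hSdiam N]
  have hfwd : ∀ᶠ k in atTop, diam ((⇑f)^[k] '' (A.1 : Set X)) ≤ c := by
    filter_upwards [(hSst N).eventually (gt_mem_nhds (half_pos hc))] with k hk
    have hdiam := NonemptyCompacts.diam_le_of_dist_lt (hAS k)
    rw [coe_iterate_inducedC, coe_iterate_inducedC] at hdiam
    linarith
  have hbwd : ∀ᶠ k in atTop, diam ((⇑f.symm)^[k] '' (A.1 : Set X)) ≤ c := by
    filter_upwards [(hUun N).eventually (gt_mem_nhds (half_pos hc)), eventually_gt_atTop 0]
      with k hk hk0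
    have hdiam := NonemptyCompacts.diam_le_of_dist_lt (hAU k hk0)
    rw [coe_iterate_inducedC, coe_iterate_inducedC] at hdiam
    linarith
  obtain ⟨x, hx⟩ := exists_not_isTotallyDisconnected_Ws_inter_Ws f.continuous f.symm.continuous
    A.1.isCompact A.2 hAnt hc hfwd hbwd
  exact hx (hTD x)

/-- If `f` is a cw-expansive homeomorphism of a compact metric space admitting
sequences of non-trivial stable continua `S n` and unstable continua `U n`,
with `d_H(S n, U n) → 0` and diameters bounded below by some `r > 0`, then the
induced map `C(f)` on the hyperspace of continua does not have the shadowing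
property. -/
theorem stmt0 {X : Type*} [MetricSpace X] [CompactSpace X] (f : X ≃ₜ X)
    (hcw : ∃ c > 0, ∀ x : X, IsTotallyDisconnected (Ws ⇑f c x ∩ Ws ⇑f.symm c x))
    (S U : ℕ → Continua X)
    (hSnt : ∀ n, ((S n).1 : Set X).Nontrivial)
    (hUnt : ∀ n, ((U n).1 : Set X).Nontrivial)
    (hSst : ∀ n, Tendsto (fun k : ℕ => Metric.diam ((⇑f)^[k] '' ((S n).1 : Set X)))
      atTop (nhds 0))
    (hUun : ∀ n, Tendsto (fun k : ℕ => Metric.diam ((⇑f.symm)^[k] '' ((U n).1 : Set X)))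
      atTop (nhds 0))
    (hd : Tendsto (fun n : ℕ => dist (S n) (U n)) atTop (nhds 0))
    (r : ℝ) (hr : 0 < r)
    (hSdiam : ∀ n, r < Metric.diam ((S n).1 : Set X))
    (hUdiam : ∀ n, r < Metric.diam ((U n).1 : Set X)) :
    ¬ ShadowingZ (inducedC ⇑f f.continuous) (inducedC ⇑f.symm f.symm.continuous) :=
  stmt0_general f hcw S U hSst hUun hd r hr hSdiam
end

section
/- If f: X → X is a continuum-wise expansive homeomorphism of a compact metric space that contains a non-degenerate subcontinuum (equivalently, a compact metric space of positive topological dimension, i.e. X is not totally disconnected), then the induced map C(f) on the hyperspace of continua C(X) is not transitive. -/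
open Set Metric Filter Function

/-!
Suppose `C(f)` is transitive and let `c` be a cw-expansivity constant. A continuum of diameter
`> c` exists (otherwise the given nondegenerate continuum would lie in a dynamical ball), so
transitivity yields arbitrarily small continua `D` with `f^n(D)` of diameter `> c` and `f^M(D)`
small again. Boundary bumping inside `D` gives a subcontinuum `K` whose first `M` iterates stay
`c/2`-close to the orbit of a point while `f^t(K)` has diameter `≥ c/2` for some `t ≤ M`. As `K`
and `f^M(K)` are small, uniform continuity keeps `f^t(K)` `c`-small for any prescribed number of
steps in both directions. This contradicts the uniform form of cw-expansivity, which follows from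
compactness of `C(X)`: a Hausdorff limit of continua of diameter `≥ c/2` that stay `c`-small for
longer and longer would be a nondegenerate continuum inside some `Γ_c(x)`.
-/

open TopologicalSpace

section GeneralTopology

variable {Y : Type*} [TopologicalSpace Y]

theorem IsOpenMap.iterate {g : Y → Y} (hg : IsOpenMap g) : ∀ n, IsOpenMap g^[n]
  | 0 => IsOpenMap.id
  | n + 1 => (hg.iterate n).comp hg

theorem TransitiveMap.exists_iterate_mem_of_iterate_mem {g : Y → Y} (hT : TransitiveMap g)
    (hg : Continuous g) (hg' : IsOpenMap g) {U V : Set Y} (hU : IsOpen U) (hV : IsOpen V)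
    (hU' : U.Nonempty) (hV' : V.Nonempty) :
    ∃ y ∈ U, ∃ n m, n ≤ m ∧ g^[n] y ∈ V ∧ g^[m] y ∈ U := by
  obtain ⟨n, -, ⟨y, hyU, rfl⟩, hyV⟩ := hT U V hU hV hU' hV'
  have hP : IsOpen (U ∩ g^[n] ⁻¹' V) := hU.inter (hV.preimage (hg.iterate n))
  have hP' : (U ∩ g^[n] ⁻¹' V).Nonempty := ⟨y, hyU, hyV⟩
  obtain ⟨m, -, ⟨-, ⟨z, hz, rfl⟩, rfl⟩, hzU⟩ :=
    hT _ U (hg'.iterate n _ hP) hU (hP'.image _) hU'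
  exact ⟨z, hz.1, n, m + n, le_add_self, hz.2, by rwa [iterate_add_apply]⟩

theorem Homeomorph.symm_iterate_image_iterate (f : Y ≃ₜ Y) {s M : ℕ} (hs : s ≤ M) (K : Set Y) :
    f.symm^[s] '' (f^[M] '' K) = f^[M - s] '' K := by
  obtain ⟨d, rfl⟩ := Nat.exists_eq_add_of_le hs
  rw [Nat.add_sub_cancel_left, iterate_add, image_comp,
    (LeftInverse.iterate f.symm_apply_apply s).image_image]

theorem exists_isClopen_subset_of_connectedComponent_subset [T2Space Y] [CompactSpace Y]
    {x : Y} {U : Set Y} (hU : IsOpen U) (h : connectedComponent x ⊆ U) :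
    ∃ W, IsClopen W ∧ x ∈ W ∧ W ⊆ U := by
  have : Nonempty {s : Set Y // IsClopen s ∧ x ∈ s} := ⟨⟨univ, isClopen_univ, mem_univ x⟩⟩
  have hdir : Directed (· ⊇ ·) fun s : {s : Set Y // IsClopen s ∧ x ∈ s} => s.1 := by
    rintro ⟨s, hs, hxs⟩ ⟨t, ht, hxt⟩
    exact ⟨⟨s ∩ t, hs.inter ht, hxs, hxt⟩, inter_subset_left, inter_subset_right⟩
  obtain ⟨⟨W, hW, hxW⟩, hWU⟩ := exists_subset_nhds_of_compactSpace hdir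
    (fun s => s.2.1.isClosed) fun y hy => hU.mem_nhds <| h <| by
      rwa [connectedComponent_eq_iInter_isClopen]
  exact ⟨W, hW, hxW, hWU⟩

/-- Boundary bumping: the component of `x` in `D ∩ G` reaches the frontier of `G`. -/
theorem IsPreconnected.exists_isPreconnected_subset_inter_not_subset [T2Space Y] {D G V : Set Y}
    (hDc : IsPreconnected D) (hD : IsCompact D) (hG : IsClosed G) (hV : IsOpen V)
    (hVG : V ⊆ G) {x z : Y} (hx : x ∈ D ∩ G) (hz : z ∈ D \ G) :
    ∃ K ⊆ D ∩ G, IsCompact K ∧ IsPreconnected K ∧ x ∈ K ∧ ¬ K ⊆ V := by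
  have := isCompact_iff_compactSpace.mp (hD.inter_right hG)
  let x' : ↥(D ∩ G) := ⟨x, hx⟩
  refine ⟨(↑) '' connectedComponent x', Subtype.coe_image_subset _ _,
    isClosed_connectedComponent.isCompact.image continuous_subtype_val,
    isPreconnected_connectedComponent.image _ continuous_subtype_val.continuousOn,
    ⟨x', mem_connectedComponent, rfl⟩, fun hKV => ?_⟩
  obtain ⟨W, hW, hxW, hWV⟩ := exists_isClopen_subset_of_connectedComponent_subset
    (hV.preimage continuous_subtype_val) (image_subset_iff.mp hKV)
  obtain ⟨O, hO, rfl⟩ := isOpen_induced_iff.mp hW.isOpen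
  have hW' : IsClosed (D ∩ G ∩ O) := by
    simpa only [Subtype.image_preimage_coe] using
      (hW.isClosed.isCompact.image continuous_subtype_val).isClosed
  have hWV' : D ∩ G ∩ O ⊆ V := fun y hy => hWV (a := ⟨y, hy.1⟩) hy.2
  have hcover : D ⊆ O ∩ V ∪ (D ∩ G ∩ O)ᶜ := fun y _ => by
    by_cases hyW : y ∈ D ∩ G ∩ O
    exacts [Or.inl ⟨hyW.2, hWV' hyW⟩, Or.inr hyW]
  have hdisj : D ∩ (O ∩ V ∩ (D ∩ G ∩ O)ᶜ) = ∅ :=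
    eq_empty_of_forall_notMem fun y ⟨hyD, ⟨hyO, hyV⟩, hyW⟩ => hyW ⟨⟨hyD, hVG hyV⟩, hyO⟩
  rcases isPreconnected_iff_subset_of_disjoint.mp hDc _ _ (hO.inter hV) hW'.isOpen_compl
    hcover hdisj with h | h
  · exact hz.2 (hVG (h hz.1).2)
  · exact h hx.1 ⟨hx, hxW⟩

end GeneralTopology

section Diameter

variable {X : Type*} [MetricSpace X]

theorem exists_lt_dist_of_lt_diam {s : Set X} {c : ℝ} (hc : 0 ≤ c) (h : c < diam s) :
    ∃ x ∈ s, ∃ y ∈ s, c < dist x y := by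
  by_contra! hs
  exact h.not_ge (diam_le_of_forall_dist_le hc hs)

theorem isClosed_setOf_forall_dist_iterate_le {g : X → X} (hg : Continuous g) (x : X) (M : ℕ)
    (r : ℝ) : IsClosed {y | ∀ t ≤ M, dist (g^[t] y) (g^[t] x) ≤ r} := by
  simp only [ofPred_forall]
  exact isClosed_iInter fun t => isClosed_iInter fun _ =>
    isClosed_le ((hg.iterate t).dist continuous_const) continuous_const

theorem isOpen_setOf_forall_dist_iterate_lt {g : X → X} (hg : Continuous g) (x : X) (M : ℕ)
    (r : ℝ) : IsOpen {y | ∀ t ≤ M, dist (g^[t] y) (g^[t] x) < r} := by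
  simp only [ofPred_forall]
  exact (finite_le_nat M).isOpen_biInter fun t _ =>
    isOpen_lt ((hg.iterate t).dist continuous_const) continuous_const

theorem diam_image_iterate_le_of_subset {g : X → X} {x : X} {K : Set X} {M : ℕ} {r : ℝ}
    (hr : 0 ≤ r) (hK : K ⊆ {y | ∀ t ≤ M, dist (g^[t] y) (g^[t] x) ≤ r / 2}) :
    ∀ t ≤ M, diam (g^[t] '' K) ≤ r := by
  intro t ht
  refine diam_le_of_forall_dist_le hr ?_
  rintro _ ⟨y, hy, rfl⟩ _ ⟨z, hz, rfl⟩
  linarith [dist_triangle_right (g^[t] y) (g^[t] z) (g^[t] x), hK hy t ht, hK hz t ht]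

theorem Continuous.exists_pos_forall_diam_image_le [CompactSpace X] {g : X → X}
    (hg : Continuous g) {c : ℝ} (hc : 0 < c) :
    ∃ δ > 0, ∀ s : Set X, diam s < δ → diam (g '' s) ≤ c := by
  obtain ⟨δ, hδ, h⟩ :=
    Metric.uniformContinuous_iff.mp (CompactSpace.uniformContinuous_of_continuous hg) c hc
  refine ⟨δ, hδ, fun s hs => diam_le_of_forall_dist_le hc.le ?_⟩
  rintro _ ⟨x, hx, rfl⟩ _ ⟨y, hy, rfl⟩
  exact (h ((dist_le_diam_of_mem isBounded_of_compactSpace hx hy).trans_lt hs)).le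

theorem Continuous.exists_pos_forall_diam_image_iterate_le [CompactSpace X] {g : X → X}
    (hg : Continuous g) {c : ℝ} (hc : 0 < c) (N : ℕ) :
    ∃ δ > 0, ∀ s : Set X, diam s < δ → ∀ k ≤ N, diam (g^[k] '' s) ≤ c := by
  induction N with
  | zero => exact ⟨c, hc, fun s hs k hk => by simpa [Nat.le_zero.mp hk] using hs.le⟩
  | succ N ih =>
    obtain ⟨δ, hδ, h⟩ := ih
    obtain ⟨δ', hδ', h'⟩ := (hg.iterate (N + 1)).exists_pos_forall_diam_image_le hc
    refine ⟨min δ δ', lt_min hδ hδ', fun s hs k hk => ?_⟩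
    rcases Nat.le_succ_iff.mp hk with hk | rfl
    exacts [h s (hs.trans_le (min_le_left _ _)) k hk, h' s (hs.trans_le (min_le_right _ _))]

end Diameter

section Hyperspace

variable {α : Type*}

theorem diam_le_diam_add_two_mul_hausdorffDist [MetricSpace α] {s t : Set α}
    (hs : s.Nonempty) (ht : t.Nonempty) (hs' : Bornology.IsBounded s)
    (ht' : Bornology.IsBounded t) : diam s ≤ diam t + 2 * hausdorffDist s t := by
  have hfin := hausdorffEDist_ne_top_of_nonempty_of_bounded hs ht hs' ht'
  refine diam_le_of_forall_dist_le
    (add_nonneg diam_nonneg (mul_nonneg zero_le_two hausdorffDist_nonneg)) fun x hx y hy => ?_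
  refine le_of_forall_pos_le_add fun ε hε => ?_
  have hlt : hausdorffDist s t < hausdorffDist s t + ε / 2 := by linarith
  obtain ⟨x', hx', hxx'⟩ := exists_dist_lt_of_hausdorffDist_lt hx hlt hfin
  obtain ⟨y', hy', hyy'⟩ := exists_dist_lt_of_hausdorffDist_lt hy hlt hfin
  calc dist x y ≤ dist x x' + dist x' y' + dist y y' := by
        linarith [dist_triangle4 x x' y' y, dist_comm y y']
    _ ≤ diam t + 2 * hausdorffDist s t + ε := by
        linarith [dist_le_diam_of_mem ht' hx' hy']

theorem NonemptyCompacts.lipschitzWith_diam [MetricSpace α] :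
    LipschitzWith 2 fun K : NonemptyCompacts α => diam (K : Set α) :=
  .of_le_add_mul 2 fun K L => by
    simpa [Metric.NonemptyCompacts.dist_eq] using
      diam_le_diam_add_two_mul_hausdorffDist K.nonempty L.nonempty K.isCompact.isBounded
        L.isCompact.isBounded

theorem NonemptyCompacts.isClosed_setOf_isPreconnected [TopologicalSpace α] [T2Space α] :
    IsClosed {K : NonemptyCompacts α | IsPreconnected (K : Set α)} := by
  refine isOpen_compl_iff.mp <| isOpen_iff_forall_mem_open.mpr fun K hK => ?_
  obtain ⟨u, v, hu, hv, hKuv, huv, hKu, hKv⟩ : ∃ u v : Set α, IsClosed u ∧ IsClosed v ∧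
      (K : Set α) ⊆ u ∪ v ∧ Disjoint u v ∧ ¬ (K : Set α) ⊆ u ∧ ¬ (K : Set α) ⊆ v := by
    simpa [isPreconnected_iff_subset_of_fully_disjoint_closed K.isCompact.isClosed] using hK
  obtain ⟨U, V, hU, hV, huU, hvV, hUV⟩ := SeparatedNhds.of_isCompact_isCompact
    (K.isCompact.inter_right hu) (K.isCompact.inter_right hv)
    (huv.mono inter_subset_right inter_subset_right)
  obtain ⟨x, hxK, hxv⟩ := not_subset.mp hKv
  obtain ⟨y, hyK, hyu⟩ := not_subset.mp hKu
  refine ⟨{L | (L : Set α) ⊆ U ∪ V} ∩ {L | ((L : Set α) ∩ U).Nonempty} ∩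
      {L | ((L : Set α) ∩ V).Nonempty}, ?_, ?_, ?_⟩
  · rintro L ⟨⟨hLUV, hLU⟩, hLV⟩ hL
    obtain ⟨z, -, hzU, hzV⟩ := hL U V hU hV hLUV hLU hLV
    exact hUV.le_bot ⟨hzU, hzV⟩
  · exact ((NonemptyCompacts.isOpen_subsets_of_isOpen (hU.union hV)).inter
      (NonemptyCompacts.isOpen_inter_nonempty_of_isOpen hU)).inter
      (NonemptyCompacts.isOpen_inter_nonempty_of_isOpen hV)
  · refine ⟨⟨fun z hz => ?_, ⟨x, hxK, huU ⟨hxK, ?_⟩⟩⟩, ⟨y, hyK, hvV ⟨hyK, ?_⟩⟩⟩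
    · rcases hKuv hz with h | h
      exacts [Or.inl (huU ⟨hz, h⟩), Or.inr (hvV ⟨hz, h⟩)]
    · exact (hKuv hxK).resolve_right hxv
    · exact (hKuv hyK).resolve_left hyu

end Hyperspace

section Continua

variable {X : Type*} [MetricSpace X]

instance [CompactSpace X] : CompactSpace (Continua X) := by
  have h : {K : NonemptyCompacts X | IsConnected (K : Set X)} =
      {K : NonemptyCompacts X | IsPreconnected (K : Set X)} :=
    Set.ext fun K => ⟨IsConnected.isPreconnected, fun h => ⟨K.nonempty, h⟩⟩
  exact isCompact_iff_compactSpace.mp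
    (h ▸ NonemptyCompacts.isClosed_setOf_isPreconnected).isCompact

theorem Continua.continuous_diam : Continuous fun A : Continua X => diam (A.1 : Set X) :=
  NonemptyCompacts.lipschitzWith_diam.continuous.comp continuous_subtype_val

theorem coe_inducedC_iterate (g : X → X) (hg : Continuous g) (n : ℕ) (A : Continua X) :
    (((inducedC g hg)^[n] A).1 : Set X) = g^[n] '' A.1 := by
  induction n with
  | zero => simp
  | succ n ih =>
    rw [iterate_succ_apply', iterate_succ', image_comp, ← ih]
    rfl

theorem continuous_inducedC (g : X → X) (hg : Continuous g) : Continuous (inducedC g hg) :=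
  (hg.nonemptyCompacts_map.comp continuous_subtype_val).subtype_mk _

theorem isOpenMap_inducedC (f : X ≃ₜ X) : IsOpenMap (inducedC f f.continuous) :=
  .of_inverse (continuous_inducedC f.symm f.symm.continuous)
    (fun _ => Subtype.ext <| NonemptyCompacts.ext <| f.image_symm_image _)
    (fun _ => Subtype.ext <| NonemptyCompacts.ext <| f.symm_image_image _)

end Continua

section CwExpansive

variable {X : Type*} [MetricSpace X]

theorem subset_Ws_of_diam_image_iterate_le [CompactSpace X] {g : X → X} {c : ℝ} {A : Set X}
    {x : X} (hx : x ∈ A) (h : ∀ k, diam (g^[k] '' A) ≤ c) : A ⊆ Ws g c x := fun _ hy k =>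
  (dist_le_diam_of_mem isBounded_of_compactSpace (mem_image_of_mem _ hy)
    (mem_image_of_mem _ hx)).trans (h k)

theorem subsingleton_of_diam_image_iterate_le [CompactSpace X] {g g' : X → X} {c : ℝ}
    (hcw : ∀ x, IsTotallyDisconnected (Ws g c x ∩ Ws g' c x)) {A : Set X}
    (hA : IsPreconnected A) (hg : ∀ k, diam (g^[k] '' A) ≤ c)
    (hg' : ∀ k, diam (g'^[k] '' A) ≤ c) : A.Subsingleton := fun x hx _ hy =>
  hcw x A (fun _ hz => ⟨subset_Ws_of_diam_image_iterate_le hx hg hz,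
    subset_Ws_of_diam_image_iterate_le hx hg' hz⟩) hA hx hy

theorem exists_lt_diam_of_nontrivial [CompactSpace X] {f : X ≃ₜ X} {c : ℝ}
    (hcw : ∀ x, IsTotallyDisconnected (Ws f c x ∩ Ws f.symm c x))
    (hA : ∃ A : Set X, IsCompact A ∧ IsConnected A ∧ A.Nontrivial) :
    ∃ A : Continua X, c < diam (A.1 : Set X) := by
  obtain ⟨A, hAc, hAconn, hAnt⟩ := hA
  by_contra! h
  let A' : Continua X := ⟨⟨⟨A, hAc⟩, hAconn.nonempty⟩, hAconn⟩
  exact hAnt.not_subsingleton <| subsingleton_of_diam_image_iterate_le hcw hAconn.isPreconnected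
    (fun k => h (inducedC _ (f.continuous.iterate k) A'))
    (fun k => h (inducedC _ (f.symm.continuous.iterate k) A'))

def DiamIterateLE (f : X ≃ₜ X) (c : ℝ) (N : ℕ) (A : Set X) : Prop :=
  ∀ k ≤ N, diam (f^[k] '' A) ≤ c ∧ diam (f.symm^[k] '' A) ≤ c

theorem exists_forall_diamIterateLE_diam_lt [CompactSpace X] {f : X ≃ₜ X} {c r : ℝ}
    (hcw : ∀ x, IsTotallyDisconnected (Ws f c x ∩ Ws f.symm c x)) (hr : 0 < r) :
    ∃ N, ∀ A : Continua X, DiamIterateLE f c N A.1 → diam (A.1 : Set X) < r := by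
  by_contra! h
  choose A hA hrA using h
  obtain ⟨T, φ, hφ, hT⟩ := CompactSpace.tendsto_subseq A
  have hlim : ∀ g (hg : Continuous g), (∀ᶠ i in atTop, diam (g '' (A (φ i)).1) ≤ c) →
      diam (g '' (T.1 : Set X)) ≤ c := fun g hg =>
    le_of_tendsto (((Continua.continuous_diam.comp (continuous_inducedC g hg)).tendsto T).comp hT)
  have hev : ∀ k, ∀ᶠ i in atTop, k ≤ φ i := fun k => hφ.tendsto_atTop.eventually_ge_atTop k
  have hT₀ : (T.1 : Set X).Subsingleton :=
    subsingleton_of_diam_image_iterate_le hcw T.2.isPreconnected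
      (fun k => hlim _ (f.continuous.iterate k) ((hev k).mono fun i hi => (hA _ k hi).1))
      (fun k => hlim _ (f.symm.continuous.iterate k) ((hev k).mono fun i hi => (hA _ k hi).2))
  have hrT : r ≤ diam (T.1 : Set X) :=
    ge_of_tendsto ((Continua.continuous_diam.tendsto T).comp hT) (.of_forall fun i => hrA (φ i))
  linarith [diam_subsingleton hT₀]

theorem diam_image_iterate_image_iterate_le {g : X → X} {K : Set X} {c δ : ℝ} {M N t : ℕ}
    (hδ : ∀ s : Set X, diam s < δ → ∀ k ≤ N, diam (g^[k] '' s) ≤ c)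
    (hK : ∀ s ≤ M, diam (g^[s] '' K) ≤ c) (hKM : diam (g^[M] '' K) < δ) (ht : t ≤ M) :
    ∀ k ≤ N, diam (g^[k] '' (g^[t] '' K)) ≤ c := by
  intro k hk
  rw [← image_comp, ← iterate_add]
  by_cases hkt : k + t ≤ M
  · exact hK _ hkt
  · rw [show k + t = (k + t - M) + M by omega, iterate_add, image_comp]
    exact hδ _ hKM _ (by omega)

theorem diamIterateLE_image_iterate {f : X ≃ₜ X} {K : Set X} {c δ : ℝ} {M N t : ℕ}
    (hδ : ∀ s : Set X, diam s < δ → ∀ k ≤ N, diam (f^[k] '' s) ≤ c)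
    (hδ' : ∀ s : Set X, diam s < δ → ∀ k ≤ N, diam (f.symm^[k] '' s) ≤ c)
    (hK : ∀ s ≤ M, diam (f^[s] '' K) ≤ c) (hK₀ : diam K < δ) (hKM : diam (f^[M] '' K) < δ)
    (ht : t ≤ M) : DiamIterateLE f c N (f^[t] '' K) := by
  refine fun k hk => ⟨diam_image_iterate_image_iterate_le hδ hK hKM ht k hk, ?_⟩
  -- the backward half is the forward statement for `f.symm`, read off from time `M`
  have h := diam_image_iterate_image_iterate_le (K := f^[M] '' K) (t := M - t) hδ'
    (fun s hs => by simpa [f.symm_iterate_image_iterate hs] using hK _ (M.sub_le s))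
    (by simpa [f.symm_iterate_image_iterate le_rfl] using hK₀) (M.sub_le t) k hk
  rwa [f.symm_iterate_image_iterate (M.sub_le t), Nat.sub_sub_self ht] at h

end CwExpansive

section Transitive

variable {X : Type*} [MetricSpace X] {f : X ≃ₜ X}

theorem TransitiveMap.exists_small_large_small (hT : TransitiveMap (inducedC f f.continuous))
    {c δ : ℝ} (hbig : ∃ A : Continua X, c < diam (A.1 : Set X)) (hδ : 0 < δ) :
    ∃ D : Continua X, ∃ n M, n ≤ M ∧ diam (D.1 : Set X) < δ ∧
      c < diam (f^[n] '' (D.1 : Set X)) ∧ diam (f^[M] '' (D.1 : Set X)) < δ := by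
  obtain ⟨A, hA⟩ := hbig
  obtain ⟨x, -⟩ := A.1.nonempty
  let pt : Continua X := ⟨{x}, by simpa using isConnected_singleton⟩
  obtain ⟨D, hD, n, M, hnM, hn, hM⟩ := hT.exists_iterate_mem_of_iterate_mem
    (continuous_inducedC _ _) (isOpenMap_inducedC f)
    (isOpen_lt Continua.continuous_diam continuous_const)
    (isOpen_lt continuous_const Continua.continuous_diam)
    ⟨pt, show diam ({x} : Set X) < δ by simpa using hδ⟩ ⟨A, hA⟩
  simp only [mem_ofPred_eq, coe_inducedC_iterate] at hn hM
  exact ⟨D, n, M, hnM, hD, hn, hM⟩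

theorem TransitiveMap.exists_diamIterateLE_le_diam [CompactSpace X]
    (hT : TransitiveMap (inducedC f f.continuous)) {c : ℝ} (hc : 0 < c)
    (hbig : ∃ A : Continua X, c < diam (A.1 : Set X)) (N : ℕ) :
    ∃ L : Continua X, DiamIterateLE f c N L.1 ∧ c / 2 ≤ diam (L.1 : Set X) := by
  obtain ⟨δ, hδ, h⟩ := f.continuous.exists_pos_forall_diam_image_iterate_le hc N
  obtain ⟨δ', hδ', h'⟩ := f.symm.continuous.exists_pos_forall_diam_image_iterate_le hc N
  obtain ⟨D, n, M, hnM, hD, hDn, hDM⟩ := hT.exists_small_large_small hbig (lt_min hδ hδ')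
  obtain ⟨_, ⟨x, hx, rfl⟩, _, ⟨z, hz, rfl⟩, hxz⟩ := exists_lt_dist_of_lt_diam hc.le hDn
  -- bump from `x` to the boundary of the set of points that `c/2`-follow `x` up to time `M`
  obtain ⟨K, hKDG, hKc, hKp, hxK, hKV⟩ :=
    D.2.isPreconnected.exists_isPreconnected_subset_inter_not_subset D.1.isCompact
      (G := {y | ∀ t ≤ M, dist (f^[t] y) (f^[t] x) ≤ c / 2})
      (V := {y | ∀ t ≤ M, dist (f^[t] y) (f^[t] x) < c / 2})
      (isClosed_setOf_forall_dist_iterate_le f.continuous x M _)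
      (isOpen_setOf_forall_dist_iterate_lt f.continuous x M _)
      (fun y hy t ht => (hy t ht).le) ⟨hx, fun t _ => by rw [dist_self]; positivity⟩
      ⟨hz, fun hzG => by linarith [hzG n hnM, dist_comm (f^[n] x) (f^[n] z)]⟩
  obtain ⟨w, hwK, hwV⟩ := not_subset.mp hKV
  obtain ⟨t, ht, hwt⟩ : ∃ t ≤ M, c / 2 ≤ dist (f^[t] w) (f^[t] x) := by
    simpa using hwV
  have hKD : K ⊆ D.1 := fun y hy => (hKDG hy).1
  refine ⟨inducedC _ (f.continuous.iterate t) ⟨⟨⟨K, hKc⟩, ⟨x, hxK⟩⟩, ⟨x, hxK⟩, hKp⟩,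
    diamIterateLE_image_iterate (fun s hs => h s (hs.trans_le (min_le_left _ _)))
      (fun s hs => h' s (hs.trans_le (min_le_right _ _)))
      (diam_image_iterate_le_of_subset hc.le fun y hy => (hKDG hy).2)
      ((diam_mono hKD isBounded_of_compactSpace).trans_lt hD)
      ((diam_mono (image_mono hKD) isBounded_of_compactSpace).trans_lt hDM) ht, ?_⟩
  exact hwt.trans (dist_le_diam_of_mem isBounded_of_compactSpace (mem_image_of_mem _ hwK)
    (mem_image_of_mem _ hxK))

end Transitive

/-- If `f` is a cw-expansive homeomorphism of a compact metric space containing a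
non-degenerate subcontinuum, then the induced map `C(f)` on the hyperspace of
continua is not transitive. -/
theorem stmt4 {X : Type*} [MetricSpace X] [CompactSpace X] (f : X ≃ₜ X)
    (hcw : ∃ c > 0, ∀ x : X, IsTotallyDisconnected (Ws ⇑f c x ∩ Ws ⇑f.symm c x))
    (hA : ∃ A : Set X, IsCompact A ∧ IsConnected A ∧ A.Nontrivial) :
    ¬ TransitiveMap (inducedC ⇑f f.continuous) := by
  intro hT
  obtain ⟨c, hc, hcw⟩ := hcw
  obtain ⟨N, hN⟩ := exists_forall_diamIterateLE_diam_lt hcw (half_pos hc)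
  obtain ⟨L, hL, hLc⟩ :=
    hT.exists_diamIterateLE_le_diam hc (exists_lt_diam_of_nontrivial hcw hA) N
  exact (hN L hL).not_ge hLc
end

section
/- Let X be a compact metric space, p ∈ X, and (X_n)_{n∈ℕ} a sequence of compact connected subsets of X with X = ⋃_{n∈ℕ} X_n, X_n ∩ X_m = {p} for all n ≠ m, and diam(X_n) → 0 as n → ∞; assume moreover that for a,b in distinct pieces X_n, X_m the metric satisfies d(a,b) = d(a,p) + d(p,b). Let h: X → X be a homeomorphism with h(X_n) = X_n for every n, such that each restriction h|X_n has the shadowing property and {p} is a quasi-attractor fixed point of h|X_n for every n ∈ ℕ. Then h has the shadowing property and {p} is a quasi-attractor fixed point of h. -/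
open Set Metric Filter Function

/-!
Both properties are checked piece by piece. Away from `p` every piece is open, because a point
of another piece is farther from it than `p` is; so trapping neighbourhoods of `p` chosen in each
piece glue to one of `X`, using the whole piece for the small ones that already lie in the given
neighbourhood. For shadowing, a `δ`-pseudo-orbit that jumps from one piece to another lands within
`δ` of `p`, hence in a trapping neighbourhood `V` of `p` which it never leaves again. So the part
outside `V` is an initial segment lying in a single piece; replacing the rest by `p` gives a
pseudo-orbit of that piece, which is shadowed by the piece's shadowing property or, for the
small pieces, by `p` itself.
-/

open Topology

lemma iterZ_apply_of_isFixedPt {X : Type*} {g ginv : X → X} {p : X} (hg : IsFixedPt g p)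
    (hginv : IsFixedPt ginv p) : ∀ n : ℤ, iterZ g ginv n p = p
  | Int.ofNat n => hg.iterate n
  | Int.negSucc n => hginv.iterate (n + 1)

lemma exists_pos_forall_mem_of_closure_image_subset {X : Type*} [MetricSpace X]
    [CompactSpace X] {g : X → X} {V : Set X} (hV : IsOpen V) (hgV : closure (g '' V) ⊆ V) :
    ∃ γ > 0, ∀ x ∈ V, ∀ y, dist (g x) y < γ → y ∈ V := by
  obtain ⟨γ, hγ, hsub⟩ := isClosed_closure.isCompact.exists_thickening_subset_open hV hgV
  exact ⟨γ, hγ, fun x hx y hy => hsub (mem_thickening_iff.2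
    ⟨g x, subset_closure (mem_image_of_mem g hx), by rwa [dist_comm]⟩)⟩

lemma dist_apply_ite_lt {X : Type*} [MetricSpace X] {g : X → X} {p : X} (hg : g p = p)
    {V : Set X} [DecidablePred (· ∈ V)] {η δ : ℝ} (hVη : V ⊆ ball p η) (hη : 0 ≤ η)
    {x : ℤ → X} (htrap : ∀ n, x n ∈ V → x (n + 1) ∈ V)
    (hx : ∀ n, dist (g (x n)) (x (n + 1)) < δ) (n : ℤ) :
    dist (g (if x n ∈ V then p else x n)) (if x (n + 1) ∈ V then p else x (n + 1)) < δ + η := by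
  by_cases hn : x n ∈ V
  · rw [if_pos hn, if_pos (htrap n hn), hg, dist_self]
    linarith [dist_nonneg.trans_lt (hx n)]
  by_cases hn' : x (n + 1) ∈ V
  · rw [if_neg hn, if_pos hn']
    calc dist (g (x n)) p ≤ dist (g (x n)) (x (n + 1)) + dist (x (n + 1)) p := dist_triangle _ _ _
      _ < δ + η := add_lt_add (hx n) (mem_ball.1 (hVη hn'))
  · rw [if_neg hn, if_neg hn']
    linarith [hx n]

structure IsStarUnion {X : Type*} [MetricSpace X] (p : X) (Xs : ℕ → Set X) : Prop where
  iUnion_eq : ⋃ n, Xs n = univ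
  inter_eq : ∀ m n, m ≠ n → Xs m ∩ Xs n = {p}
  dist_eq : ∀ m n, m ≠ n → ∀ a ∈ Xs m, ∀ b ∈ Xs n, dist a b = dist a p + dist p b

namespace IsStarUnion

variable {X : Type*} [MetricSpace X] {p : X} {Xs : ℕ → Set X}

lemma exists_mem (hX : IsStarUnion p Xs) (z : X) : ∃ k, z ∈ Xs k :=
  mem_iUnion.1 (hX.iUnion_eq.ge (mem_univ z))

lemma center_mem (hX : IsStarUnion p Xs) (k : ℕ) : p ∈ Xs k :=
  ((hX.inter_eq k (k + 1) (by omega)).ge (mem_singleton p)).1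

lemma eq_of_mem_of_mem (hX : IsStarUnion p Xs) {z : X} (hz : z ≠ p) {a b : ℕ}
    (ha : z ∈ Xs a) (hb : z ∈ Xs b) : a = b := by
  by_contra hab
  exact hz ((hX.inter_eq a b hab).le ⟨ha, hb⟩)

lemma dist_eq_of_notMem (hX : IsStarUnion p Xs) {k : ℕ} {z w : X} (hz : z ∈ Xs k)
    (hw : w ∉ Xs k) : dist w z = dist w p + dist p z := by
  obtain ⟨m, hwm⟩ := hX.exists_mem w
  exact hX.dist_eq m k (fun e => hw (e ▸ hwm)) w hwm z hz

lemma isOpen_diff_center (hX : IsStarUnion p Xs) (k : ℕ) : IsOpen (Xs k \ {p}) := by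
  refine Metric.isOpen_iff.2 fun z ⟨hzk, hzp⟩ => ⟨dist z p, dist_pos.2 hzp, fun w hw => ?_⟩
  rw [mem_ball] at hw
  have hwk : w ∈ Xs k := by
    by_contra hwk
    have := hX.dist_eq_of_notMem hzk hwk
    linarith [dist_nonneg (x := w) (y := p), dist_comm p z]
  exact ⟨hwk, fun hwp => by rw [mem_singleton_iff.1 hwp, dist_comm] at hw; exact lt_irrefl _ hw⟩

lemma eventually_subset_ball (hX : IsStarUnion p Xs) (hbdd : ∀ n, Bornology.IsBounded (Xs n))
    (hdiam : Tendsto (fun n => diam (Xs n)) atTop (𝓝 0)) {ε : ℝ} (hε : 0 < ε) :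
    ∀ᶠ k in atTop, Xs k ⊆ ball p ε :=
  (hdiam.eventually_lt_const hε).mono fun k hk _ hz =>
    (dist_le_diam_of_mem (hbdd k) hz (hX.center_mem k)).trans_lt hk

lemma diff_center_inter_iUnion_subset (hX : IsStarUnion p Xs) (V : ℕ → Set X) (k : ℕ) :
    (Xs k \ {p}) ∩ ⋃ j, V j ∩ Xs j ⊆ V k ∩ Xs k := by
  rintro z ⟨⟨hzk, hzp⟩, hz⟩
  obtain ⟨j, hzV, hzj⟩ := mem_iUnion.1 hz
  obtain rfl := hX.eq_of_mem_of_mem hzp hzj hzk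
  exact ⟨hzV, hzk⟩

lemma isOpen_iUnion_inter (hX : IsStarUnion p Xs) {V : ℕ → Set X} (hV : ∀ k, IsOpen (V k))
    {r : ℝ} (hr : 0 < r) (hrV : ∀ k, ball p r ⊆ V k) : IsOpen (⋃ k, V k ∩ Xs k) := by
  refine isOpen_iff_mem_nhds.2 fun z hz => ?_
  by_cases hzp : z = p
  · rw [hzp]
    refine mem_of_superset (ball_mem_nhds p hr) fun w hw => ?_
    obtain ⟨j, hwj⟩ := hX.exists_mem w
    exact mem_iUnion.2 ⟨j, hrV j hw, hwj⟩
  · obtain ⟨k, hzV, hzk⟩ := mem_iUnion.1 hz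
    refine mem_of_superset (((hV k).inter (hX.isOpen_diff_center k)).mem_nhds ⟨hzV, hzk, hzp⟩) ?_
    exact fun w ⟨hwV, hwk, _⟩ => mem_iUnion.2 ⟨k, hwV, hwk⟩

lemma closure_image_iUnion_inter_subset (hX : IsStarUnion p Xs) (h : X ≃ₜ X)
    (hmaps : ∀ k, MapsTo h (Xs k) (Xs k)) (hfix : h p = p) {V : ℕ → Set X} (hpV : p ∈ V 0)
    (hV : ∀ k, closure (h '' (V k ∩ Xs k)) ∩ Xs k ⊆ V k) :
    closure (h '' ⋃ k, V k ∩ Xs k) ⊆ ⋃ k, V k ∩ Xs k := by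
  rw [← h.image_closure]
  rintro _ ⟨z, hz, rfl⟩
  obtain ⟨k, hzk⟩ := hX.exists_mem z
  by_cases hzp : z = p
  · rw [hzp, hfix]
    exact mem_iUnion.2 ⟨0, hpV, hX.center_mem 0⟩
  -- near `z` the glued set is the `k`-th piece of it
  have hzcl : z ∈ closure (V k ∩ Xs k) := closure_mono (hX.diff_center_inter_iUnion_subset V k)
    ((hX.isOpen_diff_center k).inter_closure ⟨⟨hzk, hzp⟩, hz⟩)
  have hhz : h z ∈ V k := hV k ⟨h.image_closure _ ▸ mem_image_of_mem h hzcl, hmaps k hzk⟩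
  exact mem_iUnion.2 ⟨k, hhz, hmaps k hzk⟩

theorem quasiAttractor (hX : IsStarUnion p Xs) (hbdd : ∀ n, Bornology.IsBounded (Xs n))
    (hdiam : Tendsto (fun n => diam (Xs n)) atTop (𝓝 0)) (h : X ≃ₜ X)
    (hmaps : ∀ k, MapsTo h (Xs k) (Xs k)) (hfix : h p = p)
    (hqa : ∀ n, QuasiAttractorOn h (Xs n) {p}) : QuasiAttractor h {p} := by
  refine ⟨isCompact_singleton, by rw [image_singleton, hfix], fun U hU hpU => ?_⟩
  rw [singleton_subset_iff] at hpU
  obtain ⟨ε, hε, hεU⟩ := Metric.isOpen_iff.1 hU p hpU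
  obtain ⟨N, hN⟩ := eventually_atTop.1 (hX.eventually_subset_ball hbdd hdiam hε)
  have hV : ∀ k, ∃ V : Set X, IsOpen V ∧ p ∈ V ∧ V ∩ Xs k ⊆ U ∧
      closure (h '' (V ∩ Xs k)) ∩ Xs k ⊆ V ∧ (N ≤ k → V = univ) := by
    intro k
    by_cases hk : N ≤ k
    · exact ⟨univ, isOpen_univ, mem_univ p, fun z hz => hεU (hN k hk hz.2), subset_univ _,
        fun _ => rfl⟩
    · obtain ⟨V, hVo, hpV, hVU, hVcl⟩ := (hqa k).2.2.2 U hU (singleton_subset_iff.2 hpU)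
      exact ⟨V, hVo, hpV rfl, hVU, hVcl, fun hk' => absurd hk' hk⟩
  choose V hVo hpV hVU hVcl hVuniv using hV
  obtain ⟨r, hr, hrV⟩ := Metric.isOpen_iff.1
    (isOpen_biInter_finset fun k _ => hVo k : IsOpen (⋂ k ∈ Finset.range N, V k)) p
    (mem_iInter₂.2 fun k _ => hpV k)
  have hrV' : ∀ k, ball p r ⊆ V k := by
    intro k
    by_cases hk : N ≤ k
    · exact hVuniv k hk ▸ subset_univ _
    · exact hrV.trans (biInter_subset_of_mem (Finset.mem_range.2 (not_le.1 hk)))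
  refine ⟨⋃ k, V k ∩ Xs k, hX.isOpen_iUnion_inter hVo hr hrV',
    singleton_subset_iff.2 (mem_iUnion.2 ⟨0, hpV 0, hX.center_mem 0⟩),
    iUnion_subset fun k => hVU k, hX.closure_image_iUnion_inter_subset h hmaps hfix (hpV 0) hVcl⟩

lemma exists_uniform_shadowing (hX : IsStarUnion p Xs) (hbdd : ∀ n, Bornology.IsBounded (Xs n))
    (hdiam : Tendsto (fun n => diam (Xs n)) atTop (𝓝 0)) {g ginv : X → X} (hg : IsFixedPt g p)
    (hginv : IsFixedPt ginv p) (hsh : ∀ n, ShadowingZOn g ginv (Xs n)) {ε : ℝ} (hε : 0 < ε) :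
    ∃ δ > 0, ∀ k (x : ℤ → X), (∀ n, x n ∈ Xs k) → (∀ n, dist (g (x n)) (x (n + 1)) < δ) →
      ∃ y, ∀ n, dist (iterZ g ginv n y) (x n) < ε := by
  obtain ⟨N, hN⟩ := eventually_atTop.1 (hX.eventually_subset_ball hbdd hdiam hε)
  choose δk hδk hshδ using fun k => hsh k ε hε
  obtain ⟨δ, hδN, hδ⟩ := (((eventually_all_finite (finite_lt_nat N)).2 fun k _ =>
    eventually_lt_nhds (hδk k)).filter_mono nhdsWithin_le_nhds |>.and
    (self_mem_nhdsWithin : Ioi (0 : ℝ) ∈ 𝓝[>] 0)).exists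
  refine ⟨δ, hδ, fun k x hxk hx => ?_⟩
  by_cases hk : N ≤ k
  · exact ⟨p, fun n => by
      rw [iterZ_apply_of_isFixedPt hg hginv, dist_comm]; exact hN k hk (hxk n)⟩
  · obtain ⟨y, -, hy⟩ := hshδ k x hxk fun n => (hx n).trans (hδN k (not_le.1 hk))
    exact ⟨y, hy⟩

lemma mem_of_dist_apply_lt_of_notMem (hX : IsStarUnion p Xs) {g : X → X}
    (hmaps : ∀ k, MapsTo g (Xs k) (Xs k)) {V : Set X} {r : ℝ} (hrV : ball p r ⊆ V) {z w : X}
    (hzw : dist (g z) w < r) (hw : w ∉ V) {k : ℕ} (hz : z ∈ Xs k) : w ∈ Xs k := by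
  by_contra hwk
  have := hX.dist_eq_of_notMem (hmaps k hz) hwk
  refine hw (hrV (mem_ball.2 ?_))
  rw [dist_comm] at hzw
  linarith [dist_nonneg (x := p) (y := g z)]

lemma exists_forall_mem_of_notMem (hX : IsStarUnion p Xs) {g : X → X}
    (hmaps : ∀ k, MapsTo g (Xs k) (Xs k)) {V : Set X} (hpV : p ∈ V) {r : ℝ}
    (hrV : ball p r ⊆ V) {x : ℤ → X} (hx : ∀ n, dist (g (x n)) (x (n + 1)) < r)
    (htrap : ∀ n, x n ∈ V → x (n + 1) ∈ V) : ∃ k, ∀ n, x n ∉ V → x n ∈ Xs k := by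
  have hfwd : ∀ k a b, a ≤ b → x a ∈ Xs k → x b ∉ V → x b ∈ Xs k := by
    intro k a b hab hak
    induction b, hab using Int.leInduction with
    | base => exact fun _ => hak
    | succ b _ ih =>
      exact fun hb => hX.mem_of_dist_apply_lt_of_notMem hmaps hrV (hx b) hb
        (ih (mt (htrap b) hb))
  by_cases hout : ∃ n₀, x n₀ ∉ V
  · obtain ⟨n₀, hn₀⟩ := hout
    obtain ⟨k, hk⟩ := hX.exists_mem (x n₀)
    refine ⟨k, fun n hn => ?_⟩
    rcases le_total n₀ n with hle | hle
    · exact hfwd k n₀ n hle hk hn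
    · obtain ⟨j, hj⟩ := hX.exists_mem (x n)
      obtain rfl := hX.eq_of_mem_of_mem (fun e => hn₀ (by rwa [e])) (hfwd j n n₀ hle hj hn₀) hk
      exact hj
  · push Not at hout
    exact ⟨0, fun n hn => absurd (hout n) hn⟩

theorem shadowingZ [CompactSpace X] (hX : IsStarUnion p Xs)
    (hdiam : Tendsto (fun n => diam (Xs n)) atTop (𝓝 0)) (h : X ≃ₜ X)
    (hmaps : ∀ k, MapsTo h (Xs k) (Xs k)) (hfix : h p = p)
    (hsh : ∀ n, ShadowingZOn h h.symm (Xs n)) (hqa : QuasiAttractor h {p}) :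
    ShadowingZ h h.symm := by
  classical
  intro ε hε
  obtain ⟨δ₀, hδ₀, hshadow⟩ := hX.exists_uniform_shadowing (fun _ => isBounded_of_compactSpace)
    hdiam hfix (h.symm_apply_eq.2 hfix.symm) hsh (half_pos hε)
  set η := min (ε / 2) (δ₀ / 2)
  obtain ⟨V, hVo, hpV, hVη, hVcl⟩ := hqa.2.2 (ball p η) isOpen_ball
    (singleton_subset_iff.2 (mem_ball_self (by positivity)))
  obtain ⟨γ, hγ, htrap⟩ := exists_pos_forall_mem_of_closure_image_subset hVo hVcl
  obtain ⟨r, hr, hrV⟩ := Metric.isOpen_iff.1 hVo p (hpV rfl)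
  refine ⟨min (min γ r) (δ₀ / 2), by positivity, fun x hx => ?_⟩
  have hxγ n : dist (h (x n)) (x (n + 1)) < γ := (hx n).trans_le (by simp)
  have hxr n : dist (h (x n)) (x (n + 1)) < r := (hx n).trans_le (by simp)
  have hxδ n : dist (h (x n)) (x (n + 1)) < δ₀ / 2 := (hx n).trans_le (by simp)
  have hxV n : x n ∈ V → x (n + 1) ∈ V := fun hn => htrap _ hn _ (hxγ n)
  obtain ⟨k, hk⟩ := hX.exists_forall_mem_of_notMem hmaps (hpV rfl) hrV hxr hxV
  set x' : ℤ → X := fun n => if x n ∈ V then p else x n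
  have hx'k n : x' n ∈ Xs k := by
    by_cases hn : x n ∈ V
    · simp only [x', if_pos hn, hX.center_mem k]
    · simp only [x', if_neg hn, hk n hn]
  have hx'x n : dist (x' n) (x n) < ε / 2 := by
    by_cases hn : x n ∈ V
    · simp only [x', if_pos hn]
      rw [dist_comm]
      exact (mem_ball.1 (hVη hn)).trans_le (min_le_left _ _)
    · simp only [x', if_neg hn, dist_self]
      exact half_pos hε
  have hx' n : dist (h (x' n)) (x' (n + 1)) < δ₀ :=
    calc _ < δ₀ / 2 + η := dist_apply_ite_lt hfix hVη (by positivity) hxV hxδ n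
      _ ≤ δ₀ := by linarith [min_le_right (ε / 2) (δ₀ / 2)]
  obtain ⟨y, hy⟩ := hshadow k x' hx'k hx'
  refine ⟨y, fun n => ?_⟩
  calc dist (iterZ h h.symm n y) (x n) ≤ dist (iterZ h h.symm n y) (x' n) + dist (x' n) (x n) :=
        dist_triangle _ _ _
    _ < ε / 2 + ε / 2 := add_lt_add (hy n) (hx'x n)
    _ = ε := add_halves ε

end IsStarUnion

theorem stmt8_general {X : Type*} [MetricSpace X] [CompactSpace X] (p : X) (Xs : ℕ → Set X)
    (hcover : (⋃ n, Xs n) = Set.univ)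
    (hint : ∀ m n, m ≠ n → Xs m ∩ Xs n = {p})
    (hdiam : Tendsto (fun n : ℕ => Metric.diam (Xs n)) atTop (nhds 0))
    (hadd : ∀ m n, m ≠ n → ∀ a ∈ Xs m, ∀ b ∈ Xs n, dist a b = dist a p + dist p b)
    (h : X ≃ₜ X) (hinv : ∀ n, ⇑h '' Xs n = Xs n)
    (hsh : ∀ n, ShadowingZOn ⇑h ⇑h.symm (Xs n))
    (hfix : h p = p)
    (hqa : ∀ n, QuasiAttractorOn ⇑h (Xs n) {p}) :
    ShadowingZ ⇑h ⇑h.symm ∧ Function.IsFixedPt ⇑h p ∧ QuasiAttractor ⇑h {p} := by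
  have hX : IsStarUnion p Xs := ⟨hcover, hint, hadd⟩
  have hmaps k : MapsTo h (Xs k) (Xs k) := fun _ hz => (hinv k).le (mem_image_of_mem h hz)
  have hQA := hX.quasiAttractor (fun _ => isBounded_of_compactSpace) hdiam h hmaps hfix hqa
  exact ⟨hX.shadowingZ hdiam h hmaps hfix hsh hQA, hfix, hQA⟩

/-- Star union: if a compact metric space `X` is the union of compact connected
pieces `Xs n` meeting pairwise exactly at `p`, with diameters tending to `0` and
the metric additive across distinct pieces, and `h` is a homeomorphism preserving
each piece whose restriction to each piece has the shadowing property with `{p}` a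
quasi-attractor fixed point, then `h` has the shadowing property and `{p}` is a
quasi-attractor fixed point of `h`. -/
theorem stmt8 {X : Type*} [MetricSpace X] [CompactSpace X] (p : X) (Xs : ℕ → Set X)
    (hXc : ∀ n, IsCompact (Xs n)) (hXconn : ∀ n, IsConnected (Xs n))
    (hcover : (⋃ n, Xs n) = Set.univ)
    (hint : ∀ m n, m ≠ n → Xs m ∩ Xs n = {p})
    (hdiam : Tendsto (fun n : ℕ => Metric.diam (Xs n)) atTop (nhds 0))
    (hadd : ∀ m n, m ≠ n → ∀ a ∈ Xs m, ∀ b ∈ Xs n, dist a b = dist a p + dist p b)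
    (h : X ≃ₜ X) (hinv : ∀ n, ⇑h '' Xs n = Xs n)
    (hsh : ∀ n, ShadowingZOn ⇑h ⇑h.symm (Xs n))
    (hfix : h p = p)
    (hqa : ∀ n, QuasiAttractorOn ⇑h (Xs n) {p}) :
    ShadowingZ ⇑h ⇑h.symm ∧ Function.IsFixedPt ⇑h p ∧ QuasiAttractor ⇑h {p} :=
  stmt8_general p Xs hcover hint hdiam hadd h hinv hsh hfix hqa
end

section
/- Let X be a compact metric space decomposing as X = X₁ ∪ A ∪ X₂, where X₁, X₂ are compact subsets with X₁ ∩ X₂ = ∅, and A is an arc (a subspace homeomorphic to [0,1]) with endpoints p₁ ∈ X₁ and p₂ ∈ X₂ satisfying A ∩ X_i = {p_i} for i = 1,2, and let the metric on X be the bridge metric: d(a,b) = d_i(a,b) for a,b ∈ X_i, d(a,b) = d'(a,b) for a,b ∈ A (d' the arc metric of total length 1), d(a,b) = d_i(a,p_i) + d'(b,p_i) for a ∈ X_i, b ∈ A, and d(a,b) = d₁(a,p₁) + d₂(b,p₂) + 1 for a ∈ X₁, b ∈ X₂. Let h: X → X be a homeomorphism leaving X₁, X₂ and A invariant, with h(p_i)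 = p_i, such that each restriction h|X_i has the shadowing property with {p_i} a quasi-attractor of h|X_i, and h|A has the shadowing property with {p₁,p₂} a quasi-attractor of h|A. Then h has the shadowing property. -/
open Set Metric Filter Function

set_option maxHeartbeats 1000000

lemma iterZ_fixed {X : Type*} (g ginv : X → X) (p : X) (hg : g p = p)
    (hginv : ginv p = p) : ∀ n : ℤ, iterZ g ginv n p = p := by
  intro n
  cases n with
  | ofNat n => exact Function.iterate_fixed hg n
  | negSucc n => exact Function.iterate_fixed hginv (n + 1)

lemma trap_lemma {X : Type*} [MetricSpace X] [CompactSpace X]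
    (X₁ X₂ : Set X) (γ : unitInterval → X) (p₁ p₂ : X)
    (hX1c : IsCompact X₁)
    (hγiso : ∀ s t : unitInterval, dist (γ s) (γ t) = |(s : ℝ) - (t : ℝ)|)
    (hγ0 : γ 0 = p₁) (hγ1 : γ 1 = p₂)
    (hp1 : p₁ ∈ X₁) (hp2 : p₂ ∈ X₂)
    (hcover : X₁ ∪ Set.range γ ∪ X₂ = Set.univ)
    (hcross1 : ∀ a ∈ X₁, ∀ b ∈ Set.range γ, dist a b = dist a p₁ + dist p₁ b)
    (hcross2 : ∀ a ∈ X₂, ∀ b ∈ Set.range γ, dist a b = dist a p₂ + dist p₂ b)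
    (hcross12 : ∀ a ∈ X₁, ∀ b ∈ X₂, dist a b = dist a p₁ + dist b p₂ + 1)
    (h : X ≃ₜ X)
    (hinv1 : ⇑h '' X₁ = X₁)
    (hinvA : ⇑h '' Set.range γ = Set.range γ)
    (hfix1 : h p₁ = p₁)
    (hqa1 : QuasiAttractorOn ⇑h X₁ {p₁})
    (hqaA : QuasiAttractorOn ⇑h (Set.range γ) {p₁, p₂})
    (ε' : ℝ) (hε0 : 0 < ε') (hε4 : ε' ≤ 1/4) :
    ∃ (T : Set X) (ρ δt : ℝ), 0 < ρ ∧ 0 < δt ∧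
      T ⊆ Metric.ball p₁ ε' ∧
      (∀ x, dist x p₁ < ρ → x ∈ T) ∧
      (∀ x ∈ T, ∀ y, dist (h x) y < δt → y ∈ T) := by
  classical
  -- basic facts about γ
  have hγc : Continuous γ := by
    have : LipschitzWith 1 γ := by
      apply LipschitzWith.of_dist_le_mul
      intro s t
      rw [hγiso, Subtype.dist_eq, Real.dist_eq]
      simp
    exact this.continuous
  have hAcl : IsClosed (Set.range γ) := (isCompact_range hγc).isClosed
  have hdp1 : ∀ t : unitInterval, dist p₁ (γ t) = (t : ℝ) := by
    intro t
    rw [← hγ0, hγiso]; simp [abs_of_nonneg t.2.1]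
  have hparam : ∀ y ∈ Set.range γ, ∃ t : unitInterval, γ t = y ∧ (t : ℝ) = dist p₁ y := by
    rintro y ⟨t, rfl⟩
    exact ⟨t, rfl, (hdp1 t).symm⟩
  have huniq : ∀ y ∈ Set.range γ, ∀ z ∈ Set.range γ, dist p₁ y = dist p₁ z → y = z := by
    intro y hy z hz hyz
    obtain ⟨t, rfl, ht⟩ := hparam y hy
    obtain ⟨t', rfl, ht'⟩ := hparam z hz
    congr 1
    exact Subtype.ext (by rw [ht, ht', hyz])
  have hd2 : ∀ u ∈ Set.range γ, dist p₂ u = 1 - dist p₁ u := by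
    rintro u ⟨t, rfl⟩
    have h2 : dist p₂ (γ t) = 1 - (t : ℝ) := by
      rw [← hγ1, hγiso]
      simp [abs_of_nonneg (by linarith [t.2.2] : (0:ℝ) ≤ 1 - (t:ℝ))]
    rw [hdp1 t, h2]
  have hd12 : dist p₁ p₂ = 1 := by
    rw [← hγ0, ← hγ1, hγiso]; norm_num
  have hcov : ∀ z : X, z ∈ X₁ ∨ z ∈ Set.range γ ∨ z ∈ X₂ := by
    intro z
    have := hcover ▸ Set.mem_univ z
    rcases this with (h' | h') | h' <;> tauto
  have hmem1 : ∀ z ∈ X₁, h z ∈ X₁ := fun z hz => hinv1 ▸ ⟨z, hz, rfl⟩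
  have hmemA : ∀ z ∈ Set.range γ, h z ∈ Set.range γ := fun z hz => hinvA ▸ ⟨z, hz, rfl⟩
  -- X₁-side absorbing set V
  obtain ⟨-, -, -, hqa⟩ := hqa1
  obtain ⟨V, hVopen, hV1, hVsub, hVab⟩ := hqa (Metric.ball p₁ ε') isOpen_ball
    (Set.singleton_subset_iff.mpr (Metric.mem_ball_self hε0))
  have hp1V : p₁ ∈ V := hV1 rfl
  have hK₁cpt : IsCompact (closure (⇑h '' (V ∩ X₁)) ∩ X₁) :=
    (isClosed_closure.inter hX1c.isClosed).isCompact
  obtain ⟨η₁, hη₁pos, hthick⟩ := hK₁cpt.exists_thickening_subset_open hVopen hVab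
  obtain ⟨r₁, hr₁pos, hball₁⟩ := Metric.isOpen_iff.mp hVopen p₁ hp1V
  -- A-side absorbing set W
  obtain ⟨-, -, -, hqaA'⟩ := hqaA
  obtain ⟨W, hWopen, hWpair, hWsub, hWab⟩ := hqaA'
    (Metric.ball p₁ ε' ∪ Metric.ball p₂ ε')
    (isOpen_ball.union isOpen_ball)
    (by
      rw [Set.insert_subset_iff]
      exact ⟨Or.inl (Metric.mem_ball_self hε0),
        Set.singleton_subset_iff.mpr (Or.inr (Metric.mem_ball_self hε0))⟩)
  have hp1W : p₁ ∈ W := hWpair (Or.inl rfl)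
  have hp1A : p₁ ∈ Set.range γ := ⟨0, hγ0⟩
  set C := connectedComponentIn (W ∩ Set.range γ) p₁ with hCdef
  have hp1C : p₁ ∈ C := mem_connectedComponentIn ⟨hp1W, hp1A⟩
  have hCsub : C ⊆ W ∩ Set.range γ := connectedComponentIn_subset _ _
  have hCconn : IsPreconnected C := isPreconnected_connectedComponentIn
  have hballdisj : Disjoint (Metric.ball p₁ ε') (Metric.ball p₂ ε') := by
    rw [Set.disjoint_left]
    intro z hz1 hz2
    rw [Metric.mem_ball] at hz1 hz2
    have htri := dist_triangle p₁ z p₂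
    rw [hd12, dist_comm p₁ z] at htri
    linarith
  have hCball : C ⊆ Metric.ball p₁ ε' := by
    apply IsPreconnected.subset_left_of_subset_union isOpen_ball isOpen_ball hballdisj
      (fun z hz => hWsub (hCsub hz)) ⟨p₁, hp1C, Metric.mem_ball_self hε0⟩ hCconn
  set φ : X → ℝ := fun z => dist p₁ z with hφdef
  have hφc : Continuous φ := (continuous_const.dist continuous_id)
  set E := φ '' C with hEdef
  have hE0 : (0 : ℝ) ∈ E := ⟨p₁, hp1C, dist_self p₁⟩
  have hEb : ∀ e ∈ E, e < ε' := by
    rintro e ⟨z, hz, rfl⟩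
    have := hCball hz
    rw [Metric.mem_ball, dist_comm] at this
    exact this
  have hEbdd : BddAbove E := ⟨ε', fun e he => (hEb e he).le⟩
  set a := sSup E with hadef
  have ha_nonneg : 0 ≤ a := le_csSup hEbdd hE0
  have ha_le : a ≤ ε' := csSup_le ⟨0, hE0⟩ (fun e he => (hEb e he).le)
  have hEord : E.OrdConnected := (hCconn.image φ hφc.continuousOn).ordConnected
  -- a ∉ E
  have hCmem : ∀ r : ℝ, r ∈ E → ∀ (hr : r ∈ Set.Icc (0:ℝ) 1), γ ⟨r, hr⟩ ∈ C := by
    intro r hrE hr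
    obtain ⟨z, hzC, hz⟩ := hrE
    have hzA : z ∈ Set.range γ := (hCsub hzC).2
    have : γ ⟨r, hr⟩ = z := by
      apply huniq _ ⟨_, rfl⟩ _ hzA
      rw [hdp1]
      exact hz.symm
    rw [this]; exact hzC
  have ha_notin : a ∉ E := by
    intro haE
    have hamem : a ∈ Set.Icc (0:ℝ) 1 := ⟨ha_nonneg, by linarith⟩
    have hIccE : Set.Icc (0:ℝ) a ⊆ E := hEord.out hE0 haE
    -- openness of γ ⁻¹' W at the point ⟨a, _⟩
    have hOopen : IsOpen (γ ⁻¹' W) := hWopen.preimage hγc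
    have htaO : (⟨a, hamem⟩ : unitInterval) ∈ γ ⁻¹' W :=
      (hCsub (hCmem a haE hamem)).1
    obtain ⟨ι, hιpos, hιball⟩ := Metric.isOpen_iff.mp hOopen _ htaO
    set a₂ := min (a + ι/2) 1 with ha₂def
    have ha₂gt : a < a₂ := lt_min (by linarith) (by linarith)
    have ha₂mem : a₂ ∈ Set.Icc (0:ℝ) 1 := ⟨by positivity, min_le_right _ _⟩
    have hclaim : ∀ s : unitInterval, (s : ℝ) ≤ a₂ → γ s ∈ W ∩ Set.range γ := by
      intro s hs
      refine ⟨?_, ⟨s, rfl⟩⟩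
      by_cases hsa : (s : ℝ) ≤ a
      · have hsE : (s : ℝ) ∈ E := hIccE ⟨s.2.1, hsa⟩
        have := hCmem _ hsE ⟨s.2.1, s.2.2⟩
        have hss : (⟨(s:ℝ), ⟨s.2.1, s.2.2⟩⟩ : unitInterval) = s := Subtype.ext rfl
        rw [hss] at this
        exact (hCsub this).1
      · push_neg at hsa
        apply hιball
        rw [Metric.mem_ball, Subtype.dist_eq, Real.dist_eq]
        have h1 : (s:ℝ) - a ≤ ι/2 := by
          have := le_trans hs (min_le_left _ _)
          linarith
        rw [abs_of_nonneg (by linarith)]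
        linarith
    -- the bigger connected set
    set θ : ℝ → X := fun r => γ (Set.projIcc 0 1 zero_le_one r) with hθdef
    have hθc : Continuous θ := hγc.comp continuous_projIcc
    have hC₂conn : IsPreconnected (θ '' Set.Icc 0 a₂) :=
      isPreconnected_Icc.image θ hθc.continuousOn
    have hp1C₂ : p₁ ∈ θ '' Set.Icc 0 a₂ := by
      refine ⟨0, ⟨le_refl _, ha₂mem.1⟩, ?_⟩
      show γ (Set.projIcc 0 1 zero_le_one 0) = p₁
      rw [Set.projIcc_of_mem zero_le_one ⟨le_refl _, zero_le_one⟩, ← hγ0]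
      rfl
    have hC₂sub : θ '' Set.Icc 0 a₂ ⊆ W ∩ Set.range γ := by
      rintro z ⟨r, hr, rfl⟩
      have hr1 : r ∈ Set.Icc (0:ℝ) 1 := ⟨hr.1, le_trans hr.2 ha₂mem.2⟩
      show γ (Set.projIcc 0 1 zero_le_one r) ∈ _
      rw [Set.projIcc_of_mem zero_le_one hr1]
      exact hclaim _ hr.2
    have hC₂C : θ '' Set.Icc 0 a₂ ⊆ C :=
      hC₂conn.subset_connectedComponentIn hp1C₂ hC₂sub
    have ha₂E : a₂ ∈ E := by
      refine ⟨θ a₂, hC₂C ⟨a₂, ⟨ha₂mem.1, le_refl _⟩, rfl⟩, ?_⟩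
      show dist p₁ (γ (Set.projIcc 0 1 zero_le_one a₂)) = a₂
      rw [Set.projIcc_of_mem zero_le_one ha₂mem, hdp1]
    exact absurd (le_csSup hEbdd ha₂E) (not_le.mpr ha₂gt)
  have ha_pos : 0 < a :=
    lt_of_le_of_ne ha_nonneg (fun h0 => ha_notin (h0 ▸ hE0))
  -- Cset
  set Cset := {y | y ∈ Set.range γ ∧ dist p₁ y < a} with hCsetdef
  have hIccE' : ∀ r : ℝ, 0 ≤ r → r < a → r ∈ E := by
    intro r h0 hr
    obtain ⟨e, heE, hre⟩ := exists_lt_of_lt_csSup ⟨0, hE0⟩ hr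
    exact hEord.out hE0 heE ⟨h0, hre.le⟩
  have hCsetC : Cset ⊆ C := by
    rintro y ⟨hyA, hya⟩
    have : dist p₁ y ∈ E := hIccE' _ dist_nonneg hya
    obtain ⟨z, hzC, hz⟩ := this
    have := huniq z (hCsub hzC).2 y hyA hz
    rw [← this]; exact hzC
  -- K and b
  set K := closure (⇑h '' C) with hKdef
  have hKA : K ⊆ Set.range γ :=
    closure_minimal (fun z ⟨w, hw, hwz⟩ => hwz ▸ hmemA w (hCsub hw).2) hAcl
  have hKC : K ⊆ C := by
    have hconn : IsPreconnected K :=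
      ((hCconn.image _ h.continuous.continuousOn)).closure
    have hpK : p₁ ∈ K := subset_closure ⟨p₁, hp1C, hfix1⟩
    have hKW : K ⊆ W := by
      intro z hz
      exact hWab ⟨closure_mono (Set.image_mono hCsub) hz, hKA hz⟩
    exact hconn.subset_connectedComponentIn hpK (fun z hz => ⟨hKW hz, hKA hz⟩)
  have hKcpt : IsCompact K := isClosed_closure.isCompact
  have hFKne : (φ '' K).Nonempty := ⟨φ p₁, p₁, subset_closure ⟨p₁, hp1C, hfix1⟩, rfl⟩
  have hFKcpt : IsCompact (φ '' K) := hKcpt.image hφc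
  set b := sSup (φ '' K) with hbdef
  have hbFK : b ∈ φ '' K := hFKcpt.sSup_mem hFKne
  have hbE : b ∈ E := by
    obtain ⟨z, hzK, hz⟩ := hbFK
    exact ⟨z, hKC hzK, hz⟩
  have hb_nonneg : 0 ≤ b := by
    obtain ⟨z, _, hz⟩ := hbFK
    rw [← hz]; exact dist_nonneg
  have hba : b < a := lt_of_le_of_ne (le_csSup hEbdd hbE) (fun e => ha_notin (e ▸ hbE))
  have hφK : ∀ x ∈ C, dist p₁ (h x) ≤ b :=
    fun x hx => le_csSup hFKcpt.bddAbove ⟨h x, subset_closure ⟨x, hx, rfl⟩, rfl⟩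
  -- the trap
  refine ⟨(V ∩ X₁) ∪ Cset, min r₁ a, min (min η₁ (a - b)) (min r₁ (1/4)),
    lt_min hr₁pos ha_pos, lt_min (lt_min hη₁pos (by linarith)) (lt_min hr₁pos (by norm_num)),
    ?_, ?_, ?_⟩
  · rintro x (⟨hv, h1⟩ | ⟨hA, hlt⟩)
    · exact hVsub ⟨hv, h1⟩
    · rw [Metric.mem_ball, dist_comm]
      exact lt_of_lt_of_le hlt ha_le
  · intro x hx
    rcases hcov x with h1 | hA | h2
    · exact Or.inl ⟨hball₁ (Metric.mem_ball.mpr (lt_of_lt_of_le hx (min_le_left _ _))), h1⟩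
    · exact Or.inr ⟨hA, by rw [dist_comm]; exact lt_of_lt_of_le hx (min_le_right _ _)⟩
    · exfalso
      have := hcross12 p₁ hp1 x h2
      rw [dist_self] at this
      have h1 : dist p₁ x ≥ 1 := by rw [this]; linarith [dist_nonneg (x := x) (y := p₂)]
      rw [dist_comm] at h1
      have : min r₁ a ≤ a := min_le_right _ _
      linarith
  · rintro x (⟨hxV, hxX1⟩ | ⟨hxA, hxa⟩) y hy
    · -- x ∈ V ∩ X₁
      have hhx1 : h x ∈ X₁ := hmem1 x hxX1
      have hhxK : h x ∈ closure (⇑h '' (V ∩ X₁)) ∩ X₁ :=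
        ⟨subset_closure ⟨x, ⟨hxV, hxX1⟩, rfl⟩, hhx1⟩
      rcases hcov y with h1 | hA | h2
      · left
        refine ⟨hthick ?_, h1⟩
        rw [Metric.mem_thickening_iff]
        refine ⟨h x, hhxK, ?_⟩
        rw [dist_comm]
        calc dist (h x) y < min (min η₁ (a - b)) (min r₁ (1/4)) := hy
        _ ≤ η₁ := le_trans (min_le_left _ _) (min_le_left _ _)
      · right
        refine ⟨hA, ?_⟩
        have := hcross1 (h x) hhx1 y hA
        have hlt : dist p₁ y < min (min η₁ (a - b)) (min r₁ (1/4)) := by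
          have := dist_nonneg (x := h x) (y := p₁)
          linarith [hy, ‹dist (h x) y = dist (h x) p₁ + dist p₁ y›]
        calc dist p₁ y < min (min η₁ (a - b)) (min r₁ (1/4)) := hlt
        _ ≤ a - b := le_trans (min_le_left _ _) (min_le_right _ _)
        _ ≤ a := by linarith
      · exfalso
        have := hcross12 (h x) hhx1 y h2
        have h14 : min (min η₁ (a - b)) (min r₁ (1/4)) ≤ 1/4 :=
          le_trans (min_le_right _ _) (min_le_right _ _)
        have := dist_nonneg (x := h x) (y := p₁)
        have := dist_nonneg (x := y) (y := p₂)
        linarith [hy, ‹dist (h x) y = dist (h x) p₁ + dist y p₂ + 1›]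
    · -- x ∈ Cset
      have hxC : x ∈ C := hCsetC ⟨hxA, hxa⟩
      have hhxA : h x ∈ Set.range γ := hmemA x (hCsub hxC).2
      have hφhx : dist p₁ (h x) ≤ b := hφK x hxC
      rcases hcov y with h1 | hA | h2
      · left
        refine ⟨?_, h1⟩
        apply hball₁
        rw [Metric.mem_ball]
        have := hcross1 y h1 (h x) hhxA
        rw [dist_comm (h x) y] at hy
        have h1' : dist y p₁ < min (min η₁ (a - b)) (min r₁ (1/4)) := by
          have := dist_nonneg (x := p₁) (y := h x)
          linarith [hy, ‹dist y (h x) = dist y p₁ + dist p₁ (h x)›]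
        calc dist y p₁ < _ := h1'
        _ ≤ r₁ := le_trans (min_le_right _ _) (min_le_left _ _)
      · right
        refine ⟨hA, ?_⟩
        calc dist p₁ y ≤ dist p₁ (h x) + dist (h x) y := dist_triangle _ _ _
        _ < b + min (min η₁ (a - b)) (min r₁ (1/4)) := by linarith [hy]
        _ ≤ b + (a - b) := by
            have : min (min η₁ (a - b)) (min r₁ (1/4)) ≤ a - b :=
              le_trans (min_le_left _ _) (min_le_right _ _)
            linarith
        _ = a := by ring
      · exfalso
        have hc2 := hcross2 y h2 (h x) hhxA
        have hpd : dist p₂ (h x) = 1 - dist p₁ (h x) := hd2 _ hhxA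
        rw [dist_comm (h x) y] at hy
        have h14 : min (min η₁ (a - b)) (min r₁ (1/4)) ≤ 1/4 :=
          le_trans (min_le_right _ _) (min_le_right _ _)
        have := dist_nonneg (x := y) (y := p₂)
        have hble : b ≤ 1/4 := by linarith
        linarith [hy, hc2, hpd]

/-- Bridge space: suppose the compact metric space `X` decomposes as
`X = X₁ ∪ A ∪ X₂` where `X₁, X₂` are disjoint compact sets and `A = range γ` is an
arc of length `1` joining `p₁ ∈ X₁` to `p₂ ∈ X₂`, meeting `Xᵢ` only at `pᵢ`, with
the bridge metric. If `h` is a homeomorphism of `X` preserving `X₁`, `X₂` and `A`,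
fixing `p₁, p₂`, whose restrictions to `X₁`, `X₂`, `A` have the shadowing property
with `{p₁}`, `{p₂}`, `{p₁, p₂}` respective quasi-attractors, then `h` has the
shadowing property. -/
theorem stmt10 {X : Type*} [MetricSpace X] [CompactSpace X]
    (X₁ X₂ : Set X) (γ : unitInterval → X) (p₁ p₂ : X)
    (hX1c : IsCompact X₁) (hX2c : IsCompact X₂)
    (hdisj : X₁ ∩ X₂ = ∅)
    (hγiso : ∀ s t : unitInterval, dist (γ s) (γ t) = |(s : ℝ) - (t : ℝ)|)
    (hγ0 : γ 0 = p₁) (hγ1 : γ 1 = p₂)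
    (hp1 : p₁ ∈ X₁) (hp2 : p₂ ∈ X₂)
    (hcover : X₁ ∪ Set.range γ ∪ X₂ = Set.univ)
    (hA1 : Set.range γ ∩ X₁ = {p₁}) (hA2 : Set.range γ ∩ X₂ = {p₂})
    (hcross1 : ∀ a ∈ X₁, ∀ b ∈ Set.range γ, dist a b = dist a p₁ + dist p₁ b)
    (hcross2 : ∀ a ∈ X₂, ∀ b ∈ Set.range γ, dist a b = dist a p₂ + dist p₂ b)
    (hcross12 : ∀ a ∈ X₁, ∀ b ∈ X₂, dist a b = dist a p₁ + dist b p₂ + 1)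
    (h : X ≃ₜ X)
    (hinv1 : ⇑h '' X₁ = X₁) (hinv2 : ⇑h '' X₂ = X₂)
    (hinvA : ⇑h '' Set.range γ = Set.range γ)
    (hfix1 : h p₁ = p₁) (hfix2 : h p₂ = p₂)
    (hsh1 : ShadowingZOn ⇑h ⇑h.symm X₁) (hsh2 : ShadowingZOn ⇑h ⇑h.symm X₂)
    (hshA : ShadowingZOn ⇑h ⇑h.symm (Set.range γ))
    (hqa1 : QuasiAttractorOn ⇑h X₁ {p₁}) (hqa2 : QuasiAttractorOn ⇑h X₂ {p₂})
    (hqaA : QuasiAttractorOn ⇑h (Set.range γ) {p₁, p₂}) :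
    ShadowingZ ⇑h ⇑h.symm := by
    classical
  intro ε hε
  set ε' := min ε 1 / 8 with hε'def
  have hε'pos : 0 < ε' := by
    have : 0 < min ε 1 := lt_min hε one_pos
    positivity
  have hε'18 : ε' ≤ 1/8 := by
    have : min ε 1 ≤ 1 := min_le_right _ _
    rw [hε'def]; linarith
  have hε'14 : ε' ≤ 1/4 := by linarith
  have hε'ε : ε' ≤ ε := by
    have : min ε 1 ≤ ε := min_le_left _ _
    rw [hε'def]; linarith
  have h2ε' : 2 * ε' ≤ ε := by
    have : min ε 1 ≤ ε := min_le_left _ _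
    rw [hε'def]; linarith
  obtain ⟨δ₁, hδ₁pos, H₁⟩ := hsh1 ε' hε'pos
  obtain ⟨δ₂, hδ₂pos, H₂⟩ := hsh2 ε' hε'pos
  obtain ⟨δA, hδApos, HA⟩ := hshA ε' hε'pos
  -- trap at p₁
  obtain ⟨T₁, ρ₁, δt₁, hρ₁pos, hδt₁pos, hT₁ball, hT₁entry, hT₁step⟩ :=
    trap_lemma X₁ X₂ γ p₁ p₂ hX1c hγiso hγ0 hγ1 hp1 hp2 hcover hcross1 hcross2
      hcross12 h hinv1 hinvA hfix1 hqa1 hqaA ε' hε'pos hε'14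
  -- swapped data for the trap at p₂
  have hσsurj : Function.Surjective unitInterval.symm :=
    fun t => ⟨unitInterval.symm t, unitInterval.symm_symm t⟩
  have hrange' : Set.range (γ ∘ unitInterval.symm) = Set.range γ := hσsurj.range_comp γ
  have hγiso' : ∀ s t : unitInterval,
      dist ((γ ∘ unitInterval.symm) s) ((γ ∘ unitInterval.symm) t) = |(s:ℝ) - (t:ℝ)| := by
    intro s t
    show dist (γ (unitInterval.symm s)) (γ (unitInterval.symm t)) = _
    rw [hγiso, unitInterval.coe_symm_eq, unitInterval.coe_symm_eq, abs_sub_comm]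
    congr 1; ring
  have hγ0' : (γ ∘ unitInterval.symm) 0 = p₂ := by
    show γ (unitInterval.symm 0) = p₂
    rw [unitInterval.symm_zero, hγ1]
  have hγ1' : (γ ∘ unitInterval.symm) 1 = p₁ := by
    show γ (unitInterval.symm 1) = p₁
    rw [unitInterval.symm_one, hγ0]
  have hcover' : X₂ ∪ Set.range (γ ∘ unitInterval.symm) ∪ X₁ = Set.univ := by
    rw [hrange', ← hcover]
    ext z
    simp only [Set.mem_union, Set.mem_univ]
    tauto
  have hcross12' : ∀ a ∈ X₂, ∀ b ∈ X₁, dist a b = dist a p₂ + dist b p₁ + 1 := by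
    intro a ha b hb
    rw [dist_comm a b, hcross12 b hb a ha]; ring
  have hinvA' : ⇑h '' Set.range (γ ∘ unitInterval.symm) = Set.range (γ ∘ unitInterval.symm) := by
    rw [hrange']; exact hinvA
  have hqaA' : QuasiAttractorOn ⇑h (Set.range (γ ∘ unitInterval.symm)) {p₂, p₁} := by
    rw [hrange', Set.pair_comm]; exact hqaA
  obtain ⟨T₂, ρ₂, δt₂, hρ₂pos, hδt₂pos, hT₂ball, hT₂entry, hT₂step⟩ :=
    trap_lemma X₂ X₁ (γ ∘ unitInterval.symm) p₂ p₁ hX2c hγiso' hγ0' hγ1' hp2 hp1 hcover'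
      (by simpa [hrange'] using hcross2) (by simpa [hrange'] using hcross1)
      hcross12' h hinv2 hinvA' hfix2 hqa2 hqaA' ε' hε'pos hε'14
  -- basic geometric facts
  have hcov : ∀ z : X, z ∈ X₁ ∨ z ∈ Set.range γ ∨ z ∈ X₂ := by
    intro z
    have := hcover ▸ Set.mem_univ z
    rcases this with (h' | h') | h' <;> tauto
  have hmem1 : ∀ z ∈ X₁, h z ∈ X₁ := fun z hz => hinv1 ▸ ⟨z, hz, rfl⟩
  have hmem2 : ∀ z ∈ X₂, h z ∈ X₂ := fun z hz => hinv2 ▸ ⟨z, hz, rfl⟩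
  have hmemA : ∀ z ∈ Set.range γ, h z ∈ Set.range γ := fun z hz => hinvA ▸ ⟨z, hz, rfl⟩
  have hdp1 : ∀ t : unitInterval, dist p₁ (γ t) = (t : ℝ) := by
    intro t
    rw [← hγ0, hγiso]; simp [abs_of_nonneg t.2.1]
  have hd2 : ∀ u ∈ Set.range γ, dist p₂ u = 1 - dist p₁ u := by
    rintro u ⟨t, rfl⟩
    have h2 : dist p₂ (γ t) = 1 - (t : ℝ) := by
      rw [← hγ1, hγiso]
      simp [abs_of_nonneg (by linarith [t.2.2] : (0:ℝ) ≤ 1 - (t:ℝ))]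
    rw [hdp1 t, h2]
  have hd12 : dist p₁ p₂ = 1 := by
    rw [← hγ0, ← hγ1, hγiso]; norm_num
  have ex1A : ∀ z, z ∈ Set.range γ → z ∈ X₁ → z = p₁ := by
    intro z hA h1
    have : z ∈ Set.range γ ∩ X₁ := ⟨hA, h1⟩
    rwa [hA1] at this
  have ex2A : ∀ z, z ∈ Set.range γ → z ∈ X₂ → z = p₂ := by
    intro z hA h2
    have : z ∈ Set.range γ ∩ X₂ := ⟨hA, h2⟩
    rwa [hA2] at this
  have ex12 : ∀ z, z ∈ X₁ → z ∈ X₂ → False := by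
    intro z h1 h2
    have : z ∈ X₁ ∩ X₂ := ⟨h1, h2⟩
    rw [hdisj] at this
    exact this
  have hsymm1 : h.symm p₁ = p₁ := by
    conv_lhs => rw [← hfix1]
    exact h.symm_apply_apply p₁
  have hsymm2 : h.symm p₂ = p₂ := by
    conv_lhs => rw [← hfix2]
    exact h.symm_apply_apply p₂
  -- constants
  set δP := min δ₁ (min δ₂ δA) with hδPdef
  have hδPpos : 0 < δP := lt_min hδ₁pos (lt_min hδ₂pos hδApos)
  have hδP₁ : δP ≤ δ₁ := min_le_left _ _
  have hδP₂ : δP ≤ δ₂ := le_trans (min_le_right _ _) (min_le_left _ _)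
  have hδPA : δP ≤ δA := le_trans (min_le_right _ _) (min_le_right _ _)
  set ρ := min (min ρ₁ ρ₂) (min ε' (δP/2)) with hρdef
  have hρpos : 0 < ρ := lt_min (lt_min hρ₁pos hρ₂pos) (lt_min hε'pos (by linarith))
  have hρρ₁ : ρ ≤ ρ₁ := le_trans (min_le_left _ _) (min_le_left _ _)
  have hρρ₂ : ρ ≤ ρ₂ := le_trans (min_le_left _ _) (min_le_right _ _)
  have hρε' : ρ ≤ ε' := le_trans (min_le_right _ _) (min_le_left _ _)
  have hρδP2 : ρ ≤ δP/2 := le_trans (min_le_right _ _) (min_le_right _ _)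
  obtain ⟨ρh, hρhpos, Hρh⟩ := Metric.uniformContinuous_iff.mp
    (CompactSpace.uniformContinuous_of_continuous h.symm.continuous) ρ hρpos
  set δ := min (min (δP/4) ρh) (min (min δt₁ δt₂) ε') with hδdef
  have hδpos : 0 < δ :=
    lt_min (lt_min (by linarith) hρhpos) (lt_min (lt_min hδt₁pos hδt₂pos) hε'pos)
  have hδδP4 : δ ≤ δP/4 := le_trans (min_le_left _ _) (min_le_left _ _)
  have hδρh : δ ≤ ρh := le_trans (min_le_left _ _) (min_le_right _ _)
  have hδδt₁ : δ ≤ δt₁ :=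
    le_trans (min_le_right _ _) (le_trans (min_le_left _ _) (min_le_left _ _))
  have hδδt₂ : δ ≤ δt₂ :=
    le_trans (min_le_right _ _) (le_trans (min_le_left _ _) (min_le_right _ _))
  have hδε' : δ ≤ ε' := le_trans (min_le_right _ _) (min_le_right _ _)
  have hδδ₁ : δ ≤ δ₁ := le_trans hδδP4 (by linarith)
  have hδδ₂ : δ ≤ δ₂ := le_trans hδδP4 (by linarith)
  have hδδA : δ ≤ δA := le_trans hδδP4 (by linarith)
  refine ⟨δ, hδpos, ?_⟩
  intro x hx
  -- forbidden-jump lemmas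
  have hh1 : ∀ z : X, ρ ≤ dist z p₁ → ρh ≤ dist (h z) p₁ := by
    intro z hz
    by_contra hc
    push_neg at hc
    have := Hρh hc
    rw [h.symm_apply_apply, hsymm1] at this
    linarith
  have hh2 : ∀ z : X, ρ ≤ dist z p₂ → ρh ≤ dist (h z) p₂ := by
    intro z hz
    by_contra hc
    push_neg at hc
    have := Hρh hc
    rw [h.symm_apply_apply, hsymm2] at this
    linarith
  -- forward same-piece lemmas
  have sf1 : ∀ n : ℤ, x n ∈ X₁ → ρ ≤ dist (x n) p₁ → x (n+1) ∈ X₁ := by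
    intro n hn hd
    have hhx : h (x n) ∈ X₁ := hmem1 _ hn
    have hj := hx n
    rcases hcov (x (n+1)) with h1 | hA | h2
    · exact h1
    · exfalso
      have hc := hcross1 (h (x n)) hhx (x (n+1)) hA
      have hb := hh1 _ hd
      have := dist_nonneg (x := p₁) (y := x (n+1))
      linarith
    · exfalso
      have hc := hcross12 (h (x n)) hhx (x (n+1)) h2
      have := dist_nonneg (x := h (x n)) (y := p₁)
      have := dist_nonneg (x := x (n+1)) (y := p₂)
      linarith
  have sf2 : ∀ n : ℤ, x n ∈ X₂ → ρ ≤ dist (x n) p₂ → x (n+1) ∈ X₂ := by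
    intro n hn hd
    have hhx : h (x n) ∈ X₂ := hmem2 _ hn
    have hj := hx n
    rcases hcov (x (n+1)) with h1 | hA | h2
    · exfalso
      have hc := hcross12 (x (n+1)) h1 (h (x n)) hhx
      have hcm : dist (h (x n)) (x (n+1)) = dist (x (n+1)) (h (x n)) := dist_comm _ _
      have := dist_nonneg (x := x (n+1)) (y := p₁)
      have := dist_nonneg (x := h (x n)) (y := p₂)
      linarith
    · exfalso
      have hc := hcross2 (h (x n)) hhx (x (n+1)) hA
      have hb := hh2 _ hd
      have := dist_nonneg (x := p₂) (y := x (n+1))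
      linarith
    · exact h2
  have sfA : ∀ n : ℤ, x n ∈ Set.range γ → ρ ≤ dist (x n) p₁ → ρ ≤ dist (x n) p₂ →
      x (n+1) ∈ Set.range γ := by
    intro n hn hd1 hd2'
    have hhx : h (x n) ∈ Set.range γ := hmemA _ hn
    have hj := hx n
    rcases hcov (x (n+1)) with h1 | hA | h2
    · exfalso
      have hc := hcross1 (x (n+1)) h1 (h (x n)) hhx
      have hb := hh1 _ hd1
      have hcm : dist (h (x n)) (x (n+1)) = dist (x (n+1)) (h (x n)) := dist_comm _ _
      have hcm2 : dist p₁ (h (x n)) = dist (h (x n)) p₁ := dist_comm _ _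
      have := dist_nonneg (x := x (n+1)) (y := p₁)
      linarith
    · exact hA
    · exfalso
      have hc := hcross2 (x (n+1)) h2 (h (x n)) hhx
      have hb := hh2 _ hd2'
      have hcm : dist (h (x n)) (x (n+1)) = dist (x (n+1)) (h (x n)) := dist_comm _ _
      have hcm2 : dist p₂ (h (x n)) = dist (h (x n)) p₂ := dist_comm _ _
      have := dist_nonneg (x := x (n+1)) (y := p₂)
      linarith
  -- backward same-piece lemmas
  have sb1 : ∀ n : ℤ, x (n+1) ∈ X₁ → ρ ≤ dist (x (n+1)) p₁ →
      ρ ≤ dist (x n) p₁ → ρ ≤ dist (x n) p₂ → x n ∈ X₁ := by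
    intro n h1 ho1 ho2 ho3
    rcases hcov (x n) with hn1 | hnA | hn2
    · exact hn1
    · exfalso
      have := sfA n hnA ho2 ho3
      have heq := ex1A _ this h1
      rw [heq, dist_self] at ho1
      linarith
    · exact (ex12 _ h1 (sf2 n hn2 ho3)).elim
  have sb2 : ∀ n : ℤ, x (n+1) ∈ X₂ → ρ ≤ dist (x (n+1)) p₂ →
      ρ ≤ dist (x n) p₁ → ρ ≤ dist (x n) p₂ → x n ∈ X₂ := by
    intro n h2 ho1 ho2 ho3
    rcases hcov (x n) with hn1 | hnA | hn2
    · exact (ex12 _ (sf1 n hn1 ho2) h2).elim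
    · exfalso
      have := sfA n hnA ho2 ho3
      have heq := ex2A _ this h2
      rw [heq, dist_self] at ho1
      linarith
    · exact hn2
  have sbA : ∀ n : ℤ, x (n+1) ∈ Set.range γ → ρ ≤ dist (x (n+1)) p₁ →
      ρ ≤ dist (x (n+1)) p₂ → ρ ≤ dist (x n) p₁ → ρ ≤ dist (x n) p₂ →
      x n ∈ Set.range γ := by
    intro n hA ho1 ho2 ho3 ho4
    rcases hcov (x n) with hn1 | hnA | hn2
    · exfalso
      have heq := ex1A _ hA (sf1 n hn1 ho3)
      rw [heq, dist_self] at ho1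
      linarith
    · exact hnA
    · exfalso
      have heq := ex2A _ hA (sf2 n hn2 ho4)
      rw [heq, dist_self] at ho2
      linarith
  -- trapping propagation
  have trapAll₁ : ∀ m : ℤ, dist (x m) p₁ < ρ → ∀ n, m ≤ n → x n ∈ T₁ := by
    intro m hm
    refine Int.le_induction ?_ ?_
    · exact hT₁entry _ (lt_of_lt_of_le hm hρρ₁)
    · intro k _ hT
      exact hT₁step _ hT _ (lt_of_lt_of_le (hx k) hδδt₁)
  have trapAll₂ : ∀ m : ℤ, dist (x m) p₂ < ρ → ∀ n, m ≤ n → x n ∈ T₂ := by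
    intro m hm
    refine Int.le_induction ?_ ?_
    · exact hT₂entry _ (lt_of_lt_of_le hm hρρ₂)
    · intro k _ hT
      exact hT₂step _ hT _ (lt_of_lt_of_le (hx k) hδδt₂)
  by_cases hglob : ∃ n : ℤ, dist (x n) p₁ < ρ ∨ dist (x n) p₂ < ρ
  swap
  · -- Case A : the pseudo-orbit never comes near the posts, so it stays in one piece
    push_neg at hglob
    have hout : ∀ n : ℤ, ρ ≤ dist (x n) p₁ ∧ ρ ≤ dist (x n) p₂ := hglob
    rcases hcov (x 0) with h0 | h0 | h0
    · have hall : ∀ n : ℤ, x n ∈ X₁ := by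
        have hfwd : ∀ n, 0 ≤ n → x n ∈ X₁ :=
          Int.le_induction h0 (fun k _ ih => sf1 k ih (hout k).1)
        have hbwd : ∀ n ≤ (0:ℤ), x n ∈ X₁ := by
          refine Int.le_induction_down h0 ?_
          intro k _ ih
          have e : k - 1 + 1 = k := by ring
          refine sb1 (k-1) ?_ ?_ (hout (k-1)).1 (hout (k-1)).2
          · rwa [e]
          · rw [e]; exact (hout k).1
        intro n
        rcases le_total n 0 with hn | hn
        exacts [hbwd n hn, hfwd n hn]
      obtain ⟨y, -, hy⟩ := H₁ x hall (fun n => lt_of_lt_of_le (hx n) hδδ₁)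
      exact ⟨y, fun n => lt_of_lt_of_le (hy n) hε'ε⟩
    · have hall : ∀ n : ℤ, x n ∈ Set.range γ := by
        have hfwd : ∀ n, 0 ≤ n → x n ∈ Set.range γ :=
          Int.le_induction h0 (fun k _ ih => sfA k ih (hout k).1 (hout k).2)
        have hbwd : ∀ n ≤ (0:ℤ), x n ∈ Set.range γ := by
          refine Int.le_induction_down h0 ?_
          intro k _ ih
          have e : k - 1 + 1 = k := by ring
          refine sbA (k-1) ?_ ?_ ?_ (hout (k-1)).1 (hout (k-1)).2
          · rwa [e]
          · rw [e]; exact (hout k).1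
          · rw [e]; exact (hout k).2
        intro n
        rcases le_total n 0 with hn | hn
        exacts [hbwd n hn, hfwd n hn]
      obtain ⟨y, -, hy⟩ := HA x hall (fun n => lt_of_lt_of_le (hx n) hδδA)
      exact ⟨y, fun n => lt_of_lt_of_le (hy n) hε'ε⟩
    · have hall : ∀ n : ℤ, x n ∈ X₂ := by
        have hfwd : ∀ n, 0 ≤ n → x n ∈ X₂ :=
          Int.le_induction h0 (fun k _ ih => sf2 k ih (hout k).2)
        have hbwd : ∀ n ≤ (0:ℤ), x n ∈ X₂ := by
          refine Int.le_induction_down h0 ?_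
          intro k _ ih
          have e : k - 1 + 1 = k := by ring
          refine sb2 (k-1) ?_ ?_ (hout (k-1)).1 (hout (k-1)).2
          · rwa [e]
          · rw [e]; exact (hout k).2
        intro n
        rcases le_total n 0 with hn | hn
        exacts [hbwd n hn, hfwd n hn]
      obtain ⟨y, -, hy⟩ := H₂ x hall (fun n => lt_of_lt_of_le (hx n) hδδ₂)
      exact ⟨y, fun n => lt_of_lt_of_le (hy n) hε'ε⟩
  · by_cases hbdd : ∃ N : ℤ, ∀ n : ℤ, (dist (x n) p₁ < ρ ∨ dist (x n) p₂ < ρ) → N ≤ n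
    swap
    · -- Case C : near the posts at arbitrarily negative times; whole orbit is trapped
      push_neg at hbdd
      obtain ⟨m₁, hm₁, -⟩ := hbdd 0
      rcases hm₁ with hpost | hpost
      · -- trapped at p₁
        refine ⟨p₁, fun n => ?_⟩
        rw [iterZ_fixed _ _ _ hfix1 hsymm1]
        have hxn : x n ∈ T₁ := by
          obtain ⟨m, hmnear, hmlt⟩ := hbdd (min n m₁)
          rcases hmnear with c1 | c2
          · exact trapAll₁ m c1 n (le_trans hmlt.le (min_le_left _ _))
          · exfalso
            have hq : x m₁ ∈ T₂ := trapAll₂ m c2 m₁ (le_trans hmlt.le (min_le_right _ _))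
            have hq' := hT₂ball hq
            rw [Metric.mem_ball] at hq'
            have htri := dist_triangle p₁ (x m₁) p₂
            rw [hd12, dist_comm p₁ (x m₁)] at htri
            linarith
        have hb := hT₁ball hxn
        rw [Metric.mem_ball] at hb
        rw [dist_comm]
        exact lt_of_lt_of_le hb hε'ε
      · -- trapped at p₂
        refine ⟨p₂, fun n => ?_⟩
        rw [iterZ_fixed _ _ _ hfix2 hsymm2]
        have hxn : x n ∈ T₂ := by
          obtain ⟨m, hmnear, hmlt⟩ := hbdd (min n m₁)
          rcases hmnear with c1 | c2
          · exfalso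
            have hq : x m₁ ∈ T₁ := trapAll₁ m c1 m₁ (le_trans hmlt.le (min_le_right _ _))
            have hq' := hT₁ball hq
            rw [Metric.mem_ball] at hq'
            have htri := dist_triangle p₁ (x m₁) p₂
            rw [hd12, dist_comm p₁ (x m₁)] at htri
            linarith
          · exact trapAll₂ m c2 n (le_trans hmlt.le (min_le_left _ _))
        have hb := hT₂ball hxn
        rw [Metric.mem_ball] at hb
        rw [dist_comm]
        exact lt_of_lt_of_le hb hε'ε
    · -- Case B : there is a first time the pseudo-orbit comes near a post
      obtain ⟨n₀, hn₀, hn₀min⟩ := Int.exists_least_of_bdd hbdd hglob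
      have hpre : ∀ n, n < n₀ → ρ ≤ dist (x n) p₁ ∧ ρ ≤ dist (x n) p₂ := by
        intro n hn
        have hnn : ¬(dist (x n) p₁ < ρ ∨ dist (x n) p₂ < ρ) :=
          fun hnear => absurd (hn₀min n hnear) (not_le.mpr hn)
        push_neg at hnn
        exact hnn
      rcases hn₀ with hpost | hpost
      · -- first nearness is to p₁
        have htrap : ∀ n, n₀ ≤ n → x n ∈ T₁ := trapAll₁ n₀ hpost
        have hnear₁ : ∀ n, n₀ ≤ n → dist (x n) p₁ < ε' := by
          intro n hn
          have := hT₁ball (htrap n hn)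
          rwa [Metric.mem_ball] at this
        have hjn₀ : dist (h (x (n₀ - 1))) (x n₀) < δ := by
          have := hx (n₀ - 1)
          have e : n₀ - 1 + 1 = n₀ := by ring
          rwa [e] at this
        have hnotX2 : x (n₀ - 1) ∈ X₂ → False := by
          intro h2
          have hhx : h (x (n₀-1)) ∈ X₂ := hmem2 _ h2
          rcases hcov (x n₀) with hc | hc | hc
          · have heq := hcross12 (x n₀) hc (h (x (n₀-1))) hhx
            have hcm : dist (h (x (n₀-1))) (x n₀) = dist (x n₀) (h (x (n₀-1))) := dist_comm _ _
            have := dist_nonneg (x := x n₀) (y := p₁)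
            have := dist_nonneg (x := h (x (n₀-1))) (y := p₂)
            linarith
          · have heq := hcross2 (h (x (n₀-1))) hhx (x n₀) hc
            have hdp : dist p₂ (x n₀) = 1 - dist p₁ (x n₀) := hd2 _ hc
            have hlt : dist p₁ (x n₀) < ρ := by
              rw [dist_comm]; exact hpost
            have := dist_nonneg (x := h (x (n₀-1))) (y := p₂)
            linarith
          · have heq := hcross12 p₁ hp1 (x n₀) hc
            rw [dist_self] at heq
            have hge : (1:ℝ) ≤ dist p₁ (x n₀) := by
              rw [heq]; linarith [dist_nonneg (x := x n₀) (y := p₂)]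
            rw [dist_comm p₁ (x n₀)] at hge
            linarith
        rcases hcov (x (n₀ - 1)) with hP | hP | hP
        · -- backward piece is X₁
          have hback : ∀ n ≤ n₀ - 1, x n ∈ X₁ := by
            refine Int.le_induction_down hP ?_
            intro k hk ih
            have e : k - 1 + 1 = k := by ring
            have hk' : k < n₀ := by omega
            have hk1' : k - 1 < n₀ := by omega
            refine sb1 (k-1) ?_ ?_ (hpre _ hk1').1 (hpre _ hk1').2
            · rwa [e]
            · rw [e]; exact (hpre k hk').1
          set x' : ℤ → X := fun n => if n < n₀ then x n else p₁ with hx'def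
          have hx'mem : ∀ n, x' n ∈ X₁ := by
            intro n
            by_cases hn : n < n₀
            · simp only [hx'def, if_pos hn]
              exact hback n (by omega)
            · simp only [hx'def, if_neg hn]
              exact hp1
          have hx'jump : ∀ n, dist (h (x' n)) (x' (n+1)) < δ₁ := by
            intro n
            by_cases hn1 : n + 1 < n₀
            · have hn : n < n₀ := by omega
              simp only [hx'def, if_pos hn, if_pos hn1]
              exact lt_of_lt_of_le (hx n) hδδ₁
            · by_cases hn : n < n₀
              · have hn0 : n + 1 = n₀ := by omega
                simp only [hx'def, if_pos hn, if_neg hn1]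
                have hj := hx n
                rw [hn0] at hj
                calc dist (h (x n)) p₁
                    ≤ dist (h (x n)) (x n₀) + dist (x n₀) p₁ := dist_triangle _ _ _
                  _ < δ + ρ := add_lt_add hj hpost
                  _ ≤ δP/4 + δP/2 := add_le_add hδδP4 hρδP2
                  _ < δP := by linarith
                  _ ≤ δ₁ := hδP₁
              · simp only [hx'def, if_neg hn, if_neg (by omega : ¬(n+1 < n₀))]
                rw [hfix1, dist_self]
                exact hδ₁pos
          obtain ⟨y, -, hy⟩ := H₁ x' hx'mem hx'jump
          refine ⟨y, fun n => ?_⟩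
          by_cases hn : n < n₀
          · have := hy n
            simp only [hx'def, if_pos hn] at this
            exact lt_of_lt_of_le this hε'ε
          · have h1 := hy n
            simp only [hx'def, if_neg hn] at h1
            have h2 : dist p₁ (x n) < ε' := by
              rw [dist_comm]; exact hnear₁ n (by omega)
            calc dist (iterZ ⇑h ⇑h.symm n y) (x n)
                ≤ dist (iterZ ⇑h ⇑h.symm n y) p₁ + dist p₁ (x n) := dist_triangle _ _ _
              _ < ε' + ε' := add_lt_add h1 h2
              _ ≤ ε := by linarith
        · -- backward piece is the arc
          have hback : ∀ n ≤ n₀ - 1, x n ∈ Set.range γ := by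
            refine Int.le_induction_down hP ?_
            intro k hk ih
            have e : k - 1 + 1 = k := by ring
            have hk' : k < n₀ := by omega
            have hk1' : k - 1 < n₀ := by omega
            refine sbA (k-1) ?_ ?_ ?_ (hpre _ hk1').1 (hpre _ hk1').2
            · rwa [e]
            · rw [e]; exact (hpre k hk').1
            · rw [e]; exact (hpre k hk').2
          set x' : ℤ → X := fun n => if n < n₀ then x n else p₁ with hx'def
          have hx'mem : ∀ n, x' n ∈ Set.range γ := by
            intro n
            by_cases hn : n < n₀
            · simp only [hx'def, if_pos hn]
              exact hback n (by omega)
            · simp only [hx'def, if_neg hn]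
              exact ⟨0, hγ0⟩
          have hx'jump : ∀ n, dist (h (x' n)) (x' (n+1)) < δA := by
            intro n
            by_cases hn1 : n + 1 < n₀
            · have hn : n < n₀ := by omega
              simp only [hx'def, if_pos hn, if_pos hn1]
              exact lt_of_lt_of_le (hx n) hδδA
            · by_cases hn : n < n₀
              · have hn0 : n + 1 = n₀ := by omega
                simp only [hx'def, if_pos hn, if_neg hn1]
                have hj := hx n
                rw [hn0] at hj
                calc dist (h (x n)) p₁
                    ≤ dist (h (x n)) (x n₀) + dist (x n₀) p₁ := dist_triangle _ _ _
                  _ < δ + ρ := add_lt_add hj hpost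
                  _ ≤ δP/4 + δP/2 := add_le_add hδδP4 hρδP2
                  _ < δP := by linarith
                  _ ≤ δA := hδPA
              · simp only [hx'def, if_neg hn, if_neg (by omega : ¬(n+1 < n₀))]
                rw [hfix1, dist_self]
                exact hδApos
          obtain ⟨y, -, hy⟩ := HA x' hx'mem hx'jump
          refine ⟨y, fun n => ?_⟩
          by_cases hn : n < n₀
          · have := hy n
            simp only [hx'def, if_pos hn] at this
            exact lt_of_lt_of_le this hε'ε
          · have h1 := hy n
            simp only [hx'def, if_neg hn] at h1
            have h2 : dist p₁ (x n) < ε' := by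
              rw [dist_comm]; exact hnear₁ n (by omega)
            calc dist (iterZ ⇑h ⇑h.symm n y) (x n)
                ≤ dist (iterZ ⇑h ⇑h.symm n y) p₁ + dist p₁ (x n) := dist_triangle _ _ _
              _ < ε' + ε' := add_lt_add h1 h2
              _ ≤ ε := by linarith
        · exact (hnotX2 hP).elim
      · -- first nearness is to p₂
        have htrap : ∀ n, n₀ ≤ n → x n ∈ T₂ := trapAll₂ n₀ hpost
        have hnear₂ : ∀ n, n₀ ≤ n → dist (x n) p₂ < ε' := by
          intro n hn
          have := hT₂ball (htrap n hn)
          rwa [Metric.mem_ball] at this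
        have hjn₀ : dist (h (x (n₀ - 1))) (x n₀) < δ := by
          have := hx (n₀ - 1)
          have e : n₀ - 1 + 1 = n₀ := by ring
          rwa [e] at this
        have hnotX1 : x (n₀ - 1) ∈ X₁ → False := by
          intro h1
          have hhx : h (x (n₀-1)) ∈ X₁ := hmem1 _ h1
          rcases hcov (x n₀) with hc | hc | hc
          · have heq := hcross12 (x n₀) hc p₂ hp2
            rw [dist_self] at heq
            have hge : (1:ℝ) ≤ dist (x n₀) p₂ := by
              rw [heq]; linarith [dist_nonneg (x := x n₀) (y := p₁)]
            linarith
          · have heq := hcross1 (h (x (n₀-1))) hhx (x n₀) hc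
            have hdp : dist p₂ (x n₀) = 1 - dist p₁ (x n₀) := hd2 _ hc
            have hlt : dist p₂ (x n₀) < ρ := by
              rw [dist_comm]; exact hpost
            have := dist_nonneg (x := h (x (n₀-1))) (y := p₁)
            linarith
          · have heq := hcross12 (h (x (n₀-1))) hhx (x n₀) hc
            have := dist_nonneg (x := h (x (n₀-1))) (y := p₁)
            have := dist_nonneg (x := x n₀) (y := p₂)
            linarith
        rcases hcov (x (n₀ - 1)) with hP | hP | hP
        · exact (hnotX1 hP).elim
        · -- backward piece is the arc
          have hback : ∀ n ≤ n₀ - 1, x n ∈ Set.range γ := by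
            refine Int.le_induction_down hP ?_
            intro k hk ih
            have e : k - 1 + 1 = k := by ring
            have hk' : k < n₀ := by omega
            have hk1' : k - 1 < n₀ := by omega
            refine sbA (k-1) ?_ ?_ ?_ (hpre _ hk1').1 (hpre _ hk1').2
            · rwa [e]
            · rw [e]; exact (hpre k hk').1
            · rw [e]; exact (hpre k hk').2
          set x' : ℤ → X := fun n => if n < n₀ then x n else p₂ with hx'def
          have hx'mem : ∀ n, x' n ∈ Set.range γ := by
            intro n
            by_cases hn : n < n₀
            · simp only [hx'def, if_pos hn]
              exact hback n (by omega)
            · simp only [hx'def, if_neg hn]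
              exact ⟨1, hγ1⟩
          have hx'jump : ∀ n, dist (h (x' n)) (x' (n+1)) < δA := by
            intro n
            by_cases hn1 : n + 1 < n₀
            · have hn : n < n₀ := by omega
              simp only [hx'def, if_pos hn, if_pos hn1]
              exact lt_of_lt_of_le (hx n) hδδA
            · by_cases hn : n < n₀
              · have hn0 : n + 1 = n₀ := by omega
                simp only [hx'def, if_pos hn, if_neg hn1]
                have hj := hx n
                rw [hn0] at hj
                calc dist (h (x n)) p₂
                    ≤ dist (h (x n)) (x n₀) + dist (x n₀) p₂ := dist_triangle _ _ _
                  _ < δ + ρ := add_lt_add hj hpost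
                  _ ≤ δP/4 + δP/2 := add_le_add hδδP4 hρδP2
                  _ < δP := by linarith
                  _ ≤ δA := hδPA
              · simp only [hx'def, if_neg hn, if_neg (by omega : ¬(n+1 < n₀))]
                rw [hfix2, dist_self]
                exact hδApos
          obtain ⟨y, -, hy⟩ := HA x' hx'mem hx'jump
          refine ⟨y, fun n => ?_⟩
          by_cases hn : n < n₀
          · have := hy n
            simp only [hx'def, if_pos hn] at this
            exact lt_of_lt_of_le this hε'ε
          · have h1 := hy n
            simp only [hx'def, if_neg hn] at h1
            have h2 : dist p₂ (x n) < ε' := by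
              rw [dist_comm]; exact hnear₂ n (by omega)
            calc dist (iterZ ⇑h ⇑h.symm n y) (x n)
                ≤ dist (iterZ ⇑h ⇑h.symm n y) p₂ + dist p₂ (x n) := dist_triangle _ _ _
              _ < ε' + ε' := add_lt_add h1 h2
              _ ≤ ε := by linarith
        · -- backward piece is X₂
          have hback : ∀ n ≤ n₀ - 1, x n ∈ X₂ := by
            refine Int.le_induction_down hP ?_
            intro k hk ih
            have e : k - 1 + 1 = k := by ring
            have hk' : k < n₀ := by omega
            have hk1' : k - 1 < n₀ := by omega
            refine sb2 (k-1) ?_ ?_ (hpre _ hk1').1 (hpre _ hk1').2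
            · rwa [e]
            · rw [e]; exact (hpre k hk').2
          set x' : ℤ → X := fun n => if n < n₀ then x n else p₂ with hx'def
          have hx'mem : ∀ n, x' n ∈ X₂ := by
            intro n
            by_cases hn : n < n₀
            · simp only [hx'def, if_pos hn]
              exact hback n (by omega)
            · simp only [hx'def, if_neg hn]
              exact hp2
          have hx'jump : ∀ n, dist (h (x' n)) (x' (n+1)) < δ₂ := by
            intro n
            by_cases hn1 : n + 1 < n₀
            · have hn : n < n₀ := by omega
              simp only [hx'def, if_pos hn, if_pos hn1]
              exact lt_of_lt_of_le (hx n) hδδ₂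
            · by_cases hn : n < n₀
              · have hn0 : n + 1 = n₀ := by omega
                simp only [hx'def, if_pos hn, if_neg hn1]
                have hj := hx n
                rw [hn0] at hj
                calc dist (h (x n)) p₂
                    ≤ dist (h (x n)) (x n₀) + dist (x n₀) p₂ := dist_triangle _ _ _
                  _ < δ + ρ := add_lt_add hj hpost
                  _ ≤ δP/4 + δP/2 := add_le_add hδδP4 hρδP2
                  _ < δP := by linarith
                  _ ≤ δ₂ := hδP₂
              · simp only [hx'def, if_neg hn, if_neg (by omega : ¬(n+1 < n₀))]
                rw [hfix2, dist_self]
                exact hδ₂pos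
          obtain ⟨y, -, hy⟩ := H₂ x' hx'mem hx'jump
          refine ⟨y, fun n => ?_⟩
          by_cases hn : n < n₀
          · have := hy n
            simp only [hx'def, if_pos hn] at this
            exact lt_of_lt_of_le this hε'ε
          · have h1 := hy n
            simp only [hx'def, if_neg hn] at h1
            have h2 : dist p₂ (x n) < ε' := by
              rw [dist_comm]; exact hnear₂ n (by omega)
            calc dist (iterZ ⇑h ⇑h.symm n y) (x n)
                ≤ dist (iterZ ⇑h ⇑h.symm n y) p₂ + dist p₂ (x n) := dist_triangle _ _ _
              _ < ε' + ε' := add_lt_add h1 h2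
              _ ≤ ε := by linarith
end

section
/- Let X be a continuum, D = {d₁, d₂, …} ⊆ X a countable set, and 1 ≤ n ≤ ω. Let Z ⊆ X × ℝ² be the (X,D,n)-comb, Z = {(x,0) : x ∈ X \ D} ∪ {(d_i, (1/i)·y) : d_i ∈ D, y ∈ st_n}, with the product metric. Let h₁: X → X be such that (X,h₁) is a simple dynamical system with quasi-attractor fixed point p and quasi-repeller fixed point q, with p, q ∈ X \ D and h₁(D) = D. Then there exists a homeomorphism h: Z → Z such that Π ∘ h = h₁ ∘ Π, where Π: Z → X is the projection Π(x,y) = x, and (Z,h) is a simple dynamical system with quasi-attractor fixed point (p,0) and quasi-repeller fixed point (q,0). -/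
open Set Metric Filter Function

/-- The `n`-star: `n` line segments in the plane emanating from the origin,
pairwise meeting only at the origin. -/
def stN (n : ℕ) : Set (ℝ × ℝ) :=
  ⋃ i : Fin n, {q | ∃ t ∈ Set.Icc (0 : ℝ) 1, q = (t, t * (i : ℝ))}

/-- The `ω`-star: countably many segments emanating from the origin whose
diameters tend to zero. -/
def stOmega : Set (ℝ × ℝ) :=
  ⋃ n : ℕ, {q | ∃ t ∈ Set.Icc (0 : ℝ) (((n : ℝ) + 1)⁻¹), q = (t, t / ((n : ℝ) + 1))}

/-- The `(X, D, s)`-comb, where `D = {d 0, d 1, …}` and `s` is a star: the subset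
of `X × ℝ²` obtained from `X × {0}` by attaching at each point `d i` a copy of the
star `s` scaled by `1/(i+1)`. The product `X × ℝ²` carries the sup (product)
metric. -/
def combSet {X : Type*} (d : ℕ → X) (s : Set (ℝ × ℝ)) : Set (X × (ℝ × ℝ)) :=
  {z | (z.1 ∉ Set.range d ∧ z.2 = 0) ∨
    ∃ i : ℕ, ∃ y ∈ s, z.1 = d i ∧ z.2 = ((i : ℝ) + 1)⁻¹ • y}

/-! The lift of `h₁` sends `(x, v)` to `(h₁ x, λ • v)`, where `λ` is the ratio of the sizes
`1/(i+1)` of the teeth over `h₁ x` and over `x`. For every `ε > 0` only finitely many teeth have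
size `≥ ε`, so near any point of `X` all teeth but possibly the one over that point are small.
This makes the lift continuous, and at a point `(x, 0)` with `x ∉ D` it shows that the
neighbourhoods of `(x, 0)` are exactly the preimages under `Π` of those of `x`. Fixed points,
quasi-attraction and convergence of orbits then transfer from `h₁` through the semiconjugacy `Π`. -/

open Topology

noncomputable section

section ToothScale

variable {X : Type*} (d : ℕ → X)

open Classical in
def toothScale (x : X) : ℝ :=
  if x ∈ range d then (((invFun d x : ℕ) : ℝ) + 1)⁻¹ else 0

variable {d}

theorem toothScale_apply (hd : Injective d) (i : ℕ) : toothScale d (d i) = ((i : ℝ) + 1)⁻¹ := by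
  rw [toothScale, if_pos (mem_range_self i), leftInverse_invFun hd i]

theorem toothScale_nonneg (x : X) : 0 ≤ toothScale d x := by
  unfold toothScale
  split_ifs <;> positivity

theorem toothScale_eq_zero_iff {x : X} : toothScale d x = 0 ↔ x ∉ range d := by
  unfold toothScale
  split_ifs with hx
  · simp only [hx, not_true_eq_false, iff_false]
    positivity
  · simp only [hx, not_false_eq_true]

theorem tendsto_toothScale_cofinite (hd : Injective d) :
    Tendsto (toothScale d) cofinite (𝓝 0) := by
  intro U hU
  have hfin : {i : ℕ | ((i : ℝ) + 1)⁻¹ ∉ U}.Finite := by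
    have := tendsto_one_div_add_atTop_nhds_zero_nat (𝕜 := ℝ) hU
    rw [← Nat.cofinite_eq_atTop, mem_map, mem_cofinite] at this
    simp only [one_div] at this
    exact this
  rw [mem_map, mem_cofinite]
  refine (hfin.image d).subset fun x hx => ?_
  obtain ⟨i, rfl⟩ : x ∈ range d := by
    by_contra hxd
    exact hx (by simpa [toothScale_eq_zero_iff.mpr hxd] using mem_of_mem_nhds hU)
  exact ⟨i, by simpa [toothScale_apply hd] using hx, rfl⟩

variable [TopologicalSpace X] [T1Space X]

theorem tendsto_toothScale_nhdsNE (hd : Injective d) (x : X) :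
    Tendsto (toothScale d) (𝓝[≠] x) (𝓝 0) :=
  (tendsto_toothScale_cofinite hd).mono_left (nhdsNE_le_cofinite x)

theorem continuousAt_toothScale (hd : Injective d) {x : X} (hx : x ∉ range d) :
    ContinuousAt (toothScale d) x := by
  rw [← continuousWithinAt_compl_self, ContinuousWithinAt, toothScale_eq_zero_iff.mpr hx]
  exact tendsto_toothScale_nhdsNE hd x

end ToothScale

section Comb

variable {X : Type*} {d : ℕ → X} {s : Set (ℝ × ℝ)}

theorem exists_snd_eq_toothScale_smul (hd : Injective d) {z : X × (ℝ × ℝ)}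
    (hz : z ∈ combSet d s) : ∃ y ∈ insert 0 s, z.2 = toothScale d z.1 • y := by
  rcases hz with ⟨-, hv⟩ | ⟨i, y, hy, hx, hv⟩
  · exact ⟨0, mem_insert _ _, by rw [hv, smul_zero]⟩
  · exact ⟨y, mem_insert_of_mem _ hy, by rw [hv, hx, toothScale_apply hd]⟩

theorem norm_snd_le_toothScale_mul (hd : Injective d) {C : ℝ} (hC : ∀ y ∈ insert 0 s, ‖y‖ ≤ C)
    {z : X × (ℝ × ℝ)} (hz : z ∈ combSet d s) : ‖z.2‖ ≤ toothScale d z.1 * C := by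
  obtain ⟨y, hy, hv⟩ := exists_snd_eq_toothScale_smul hd hz
  rw [hv, norm_smul, Real.norm_of_nonneg (toothScale_nonneg _)]
  exact mul_le_mul_of_nonneg_left (hC y hy) (toothScale_nonneg _)

variable (d) in
def combLift (e : X → X) (z : X × (ℝ × ℝ)) : X × (ℝ × ℝ) :=
  (e z.1, (toothScale d (e z.1) / toothScale d z.1) • z.2)

theorem combLift_toothScale_smul {e : X → X} {x : X}
    (hx : toothScale d x = 0 → toothScale d (e x) = 0) (y : ℝ × ℝ) :
    combLift d e (x, toothScale d x • y) = (e x, toothScale d (e x) • y) := by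
  simp only [combLift, smul_smul, div_mul_cancel_of_imp hx]

theorem toothScale_comp_eq_zero_iff {e : X → X} (he : e ⁻¹' range d = range d) (x : X) :
    toothScale d (e x) = 0 ↔ toothScale d x = 0 := by
  rw [toothScale_eq_zero_iff, toothScale_eq_zero_iff, ← mem_preimage, he]

theorem combLift_mem (hd : Injective d) {e : X → X} (he : e ⁻¹' range d = range d)
    {z : X × (ℝ × ℝ)} (hz : z ∈ combSet d s) : combLift d e z ∈ combSet d s := by
  rcases hz with ⟨hx, hv⟩ | ⟨i, y, hy, hx, hv⟩
  · refine Or.inl ⟨?_, ?_⟩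
    · show e z.1 ∉ range d
      rwa [← mem_preimage, he]
    · show (_ : ℝ) • z.2 = 0
      rw [hv, smul_zero]
  · obtain ⟨j, hj⟩ : e (d i) ∈ range d := by
      rw [← mem_preimage, he]
      exact mem_range_self i
    obtain ⟨x, v⟩ := z
    obtain ⟨rfl, rfl⟩ : x = d i ∧ v = _ := ⟨hx, hv⟩
    rw [← toothScale_apply hd i, combLift_toothScale_smul (toothScale_comp_eq_zero_iff he _).mpr,
      ← hj]
    exact Or.inr ⟨j, y, hy, rfl, by rw [toothScale_apply hd]⟩

theorem combLift_combLift (hd : Injective d) {e e' : X → X} (hee' : LeftInverse e' e)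
    (he : e ⁻¹' range d = range d) {z : X × (ℝ × ℝ)} (hz : z ∈ combSet d s) :
    combLift d e' (combLift d e z) = z := by
  obtain ⟨y, -, hv⟩ := exists_snd_eq_toothScale_smul hd hz
  obtain ⟨x, v⟩ := z
  dsimp only at hv
  subst hv
  have hzero := toothScale_comp_eq_zero_iff he x
  rw [combLift_toothScale_smul hzero.mpr,
    combLift_toothScale_smul (e := e') (x := e x) (by rw [hee' x]; exact hzero.mp), hee' x]

variable [TopologicalSpace X] [T1Space X]

theorem continuous_combLift (hd : Injective d) (hs : Bornology.IsBounded s) (e : X ≃ₜ X)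
    (he : e ⁻¹' range d = range d) : Continuous fun z : combSet d s => combLift d e z := by
  obtain ⟨C, hC⟩ := isBounded_iff_forall_norm_le.mp (hs.insert 0)
  have hπ : Continuous fun z : combSet d s => z.1.1 := continuous_fst.comp continuous_subtype_val
  refine continuous_iff_continuousAt.mpr fun ⟨⟨x₀, v₀⟩, hz₀⟩ => ?_
  set c := toothScale d (e x₀) / toothScale d x₀
  -- `ψ x` measures how far the lift over `x` is from `v ↦ c • v`: it vanishes at `x₀`, and near
  -- `x₀` both teeth over `x` and over `e x` are small.
  let ψ : X → ℝ := fun x => toothScale d (e x) - c * toothScale d x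
  have hψ₀ : ψ x₀ = 0 :=
    sub_eq_zero.mpr (div_mul_cancel_of_imp (toothScale_comp_eq_zero_iff he x₀).mpr).symm
  have hψ : ContinuousAt ψ x₀ := by
    rw [← continuousWithinAt_compl_self, ContinuousWithinAt, hψ₀]
    have hwe : Tendsto (toothScale d ∘ e) (𝓝[≠] x₀) (𝓝 0) :=
      (tendsto_toothScale_nhdsNE hd (e x₀)).comp (e.map_punctured_nhds_eq x₀).le
    simpa using hwe.sub ((tendsto_toothScale_nhdsNE hd x₀).const_mul c)
  have hbound : ∀ z : combSet d s, ‖(combLift d e z).2 - c • z.1.2‖ ≤ |ψ z.1.1| * C := by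
    rintro ⟨⟨x, v⟩, hz⟩
    obtain ⟨y, hy, hv⟩ := exists_snd_eq_toothScale_smul hd hz
    dsimp only at hv
    subst hv
    show ‖(combLift d e (x, toothScale d x • y)).2 - c • toothScale d x • y‖ ≤ |ψ x| * C
    rw [combLift_toothScale_smul (toothScale_comp_eq_zero_iff he x).mpr, smul_smul, ← sub_smul,
      norm_smul, Real.norm_eq_abs]
    exact mul_le_mul_of_nonneg_left (hC y hy) (abs_nonneg _)
  have hdiff : Tendsto (fun z : combSet d s => (combLift d e z).2 - c • z.1.2)
      (𝓝 ⟨(x₀, v₀), hz₀⟩) (𝓝 0) := by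
    refine squeeze_zero_norm hbound ?_
    simpa [hψ₀] using ((ContinuousAt.comp (f := fun z : combSet d s => z.1.1)
      (x := ⟨(x₀, v₀), hz₀⟩) hψ hπ.continuousAt).tendsto.abs.mul_const C)
  have hlin : ContinuousAt (fun z : combSet d s => c • z.1.2) ⟨(x₀, v₀), hz₀⟩ := by fun_prop
  refine ContinuousAt.prodMk (f := fun z : combSet d s => e z.1.1)
    (g := fun z => (combLift d e z).2) (e.continuous.comp hπ).continuousAt ?_
  have h := hdiff.add hlin
  simp only [sub_add_cancel, zero_add] at h
  exact h

theorem nhds_eq_comap_fst (hd : Injective d) (hs : Bornology.IsBounded s) {P : combSet d s}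
    (hP : P.1.1 ∉ range d) : 𝓝 P = comap (fun z : combSet d s => z.1.1) (𝓝 P.1.1) := by
  obtain ⟨C, hC⟩ := isBounded_iff_forall_norm_le.mp (hs.insert 0)
  have hπ : Continuous fun z : combSet d s => z.1.1 := continuous_fst.comp continuous_subtype_val
  refine le_antisymm (hπ.tendsto P).le_comap ?_
  have hw : Tendsto (fun z : combSet d s => toothScale d z.1.1 * C)
      (comap (fun z : combSet d s => z.1.1) (𝓝 P.1.1)) (𝓝 0) := by
    simpa [toothScale_eq_zero_iff.mpr hP] using
      ((continuousAt_toothScale hd hP).tendsto.comp tendsto_comap).mul_const C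
  have hP₂ : P.1.2 = 0 :=
    norm_le_zero_iff.mp ((norm_snd_le_toothScale_mul hd hC P.2).trans
      (by rw [toothScale_eq_zero_iff.mpr hP, zero_mul]))
  rw [← tendsto_id', tendsto_subtype_rng]
  refine (tendsto_comap.prodMk_nhds ?_ : Tendsto (fun z : combSet d s => (z.1.1, z.1.2)) _ _)
  rw [hP₂]
  exact squeeze_zero_norm (fun z => norm_snd_le_toothScale_mul hd hC z.2) hw

variable (d s) in
def combHomeomorph (hd : Injective d) (hs : Bornology.IsBounded s) (e : X ≃ₜ X)
    (he : e ⁻¹' range d = range d) : combSet d s ≃ₜ combSet d s :=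
  have he' : e.symm ⁻¹' range d = range d := by
    rw [e.preimage_symm]
    nth_rw 1 [← he]
    exact e.image_preimage _
  { toFun z := ⟨combLift d e z, combLift_mem hd he z.2⟩
    invFun z := ⟨combLift d e.symm z, combLift_mem hd he' z.2⟩
    left_inv z := Subtype.ext (combLift_combLift hd e.symm_apply_apply he z.2)
    right_inv z := Subtype.ext (combLift_combLift hd e.apply_symm_apply he' z.2)
    continuous_toFun := (continuous_combLift hd hs e he).subtype_mk _
    continuous_invFun := (continuous_combLift hd hs e.symm he').subtype_mk _ }

end Comb

theorem isBounded_stN (m : ℕ) : Bornology.IsBounded (stN m) := by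
  refine ((isBounded_Icc (0 : ℝ) 1).prod (isBounded_Icc (0 : ℝ) m)).subset ?_
  rintro _ ⟨_, ⟨i, rfl⟩, t, ⟨ht₀, ht₁⟩, rfl⟩
  have hi : (i : ℝ) ≤ m := by exact_mod_cast i.isLt.le
  exact ⟨⟨ht₀, ht₁⟩, by positivity, by nlinarith⟩

theorem isBounded_stOmega : Bornology.IsBounded stOmega := by
  refine ((isBounded_Icc (0 : ℝ) 1).prod (isBounded_Icc (0 : ℝ) 1)).subset ?_
  rintro _ ⟨_, ⟨n, rfl⟩, t, ⟨ht₀, ht₁⟩, rfl⟩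
  have hn : ((n : ℝ) + 1)⁻¹ ≤ 1 := inv_le_one_of_one_le₀ (by linarith [n.cast_nonneg (α := ℝ)])
  have hn' : (1 : ℝ) ≤ n + 1 := by linarith [n.cast_nonneg (α := ℝ)]
  exact ⟨⟨ht₀, ht₁.trans hn⟩, by positivity, (div_le_self ht₀ hn').trans (ht₁.trans hn)⟩

section Semiconj

variable {Z X : Type*} [TopologicalSpace Z] [TopologicalSpace X] {π : Z → X}

theorem eq_of_nhds_eq_comap [T1Space Z] {P z : Z} (hP : 𝓝 P = comap π (𝓝 (π P)))
    (hz : π z = π P) : z = P :=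
  (specializes_iff_pure.mpr <| by
    rw [hP, ← map_le_iff_le_comap, map_pure, hz]
    exact pure_le_nhds _).eq

theorem QuasiAttractor.of_semiconj {h : Z → Z} {e : X → X} (hπ : Continuous π)
    (hconj : Semiconj π h e) {P : Z} (hhP : h P = P) (hP : 𝓝 P = comap π (𝓝 (π P)))
    (hqa : QuasiAttractor e {π P}) : QuasiAttractor h {P} := by
  refine ⟨isCompact_singleton, by rw [image_singleton, hhP], fun U hU hPU => ?_⟩
  obtain ⟨W, hW, hWU⟩ := mem_comap.mp (hP ▸ hU.mem_nhds (hPU rfl))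
  obtain ⟨W', hW'W, hW'o, hPW'⟩ := mem_nhds_iff.mp hW
  obtain ⟨V, hVo, hPV, hVW', hVcl⟩ := hqa.2.2 W' hW'o (singleton_subset_iff.mpr hPW')
  refine ⟨π ⁻¹' V, hVo.preimage hπ, singleton_subset_iff.mpr (hPV rfl),
    fun z hz => hWU (hW'W (hVW' hz)), ?_⟩
  calc closure (h '' (π ⁻¹' V)) ⊆ closure (π ⁻¹' (e '' V)) :=
        closure_mono (image_subset_iff.mpr fun z hz => ⟨π z, hz, (hconj z).symm⟩)
    _ ⊆ π ⁻¹' closure (e '' V) := hπ.closure_preimage_subset _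
    _ ⊆ π ⁻¹' V := preimage_mono hVcl

theorem tendsto_iterate_of_semiconj {h : Z → Z} {e : X → X} (hconj : Semiconj π h e) {P : Z}
    (hP : 𝓝 P = comap π (𝓝 (π P))) {z : Z}
    (hz : Tendsto (fun n => e^[n] (π z)) atTop (𝓝 (π P))) :
    Tendsto (fun n => h^[n] z) atTop (𝓝 P) := by
  rw [hP, tendsto_comap_iff]
  convert hz using 2 with n
  exact hconj.iterate_right n z

end Semiconj

theorem SimpleSystem.of_semiconj {Z X : Type*} [MetricSpace Z] [MetricSpace X] {h : Z ≃ₜ Z}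
    {e : X ≃ₜ X} {π : Z → X} (hπ : Continuous π) (hconj : Semiconj π h e) {P Q : Z}
    (hP : 𝓝 P = comap π (𝓝 (π P))) (hQ : 𝓝 Q = comap π (𝓝 (π Q)))
    (he : SimpleSystem e (π P) (π Q)) : SimpleSystem h P Q := by
  obtain ⟨hfP, hfQ, hqaP, hqaQ, horbit⟩ := he
  have hconj' : Semiconj π h.symm e.symm :=
    hconj.inverses_right h.apply_symm_apply e.symm_apply_apply
  have hhP : h P = P := eq_of_nhds_eq_comap hP ((hconj P).trans hfP)
  have hhQ : h Q = Q := eq_of_nhds_eq_comap hQ ((hconj Q).trans hfQ)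
  refine ⟨hhP, hhQ, QuasiAttractor.of_semiconj hπ hconj hhP hP hqaP,
    QuasiAttractor.of_semiconj hπ hconj' (h.symm_apply_eq.mpr hhQ.symm) hQ hqaQ,
    fun z hzP hzQ => ?_⟩
  obtain ⟨hfwd, hbwd⟩ := horbit (π z) (mt (eq_of_nhds_eq_comap hP) hzP)
    (mt (eq_of_nhds_eq_comap hQ) hzQ)
  exact ⟨tendsto_iterate_of_semiconj hconj hP hfwd, tendsto_iterate_of_semiconj hconj' hQ hbwd⟩

end

theorem stmt13_general {X : Type*} [MetricSpace X]
    (d : ℕ → X) (hd : Function.Injective d)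
    (s : Set (ℝ × ℝ)) (hs : (∃ m : ℕ, 1 ≤ m ∧ s = stN m) ∨ s = stOmega)
    (h₁ : X ≃ₜ X) (p q : X)
    (hsimple : SimpleSystem h₁ p q)
    (hp : p ∉ Set.range d) (hq : q ∉ Set.range d)
    (hD : ⇑h₁ '' Set.range d = Set.range d) :
    ∃ h : ↥(combSet d s) ≃ₜ ↥(combSet d s),
      (∀ z : ↥(combSet d s), ((h z : X × (ℝ × ℝ))).1 = h₁ ((z : X × (ℝ × ℝ)).1)) ∧
      SimpleSystem h ⟨(p, 0), Or.inl ⟨hp, rfl⟩⟩ ⟨(q, 0), Or.inl ⟨hq, rfl⟩⟩ := by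
  have hsb : Bornology.IsBounded s := by
    rcases hs with ⟨m, -, rfl⟩ | rfl
    exacts [isBounded_stN m, isBounded_stOmega]
  have he : h₁ ⁻¹' range d = range d := by
    nth_rw 1 [← hD]
    exact h₁.preimage_image _
  refine ⟨combHomeomorph d s hd hsb h₁ he, fun z => rfl, ?_⟩
  have hπ : Continuous fun z : combSet d s => z.1.1 := continuous_fst.comp continuous_subtype_val
  exact SimpleSystem.of_semiconj hπ (fun z => rfl) (nhds_eq_comap_fst hd hsb hp)
    (nhds_eq_comap_fst hd hsb hq) hsimple

/-- If `(X, h₁)` is a simple dynamical system on a continuum `X` with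
quasi-attractor fixed point `p` and quasi-repeller fixed point `q` lying outside
the countable set `D = range d`, and `h₁ (D) = D`, then the `(X, D, n)`-comb `Z`
(with teeth a star `st_n`, `1 ≤ n ≤ ω`) carries a homeomorphism `h` with
`Π ∘ h = h₁ ∘ Π` such that `(Z, h)` is a simple dynamical system with
quasi-attractor fixed point `(p, 0)` and quasi-repeller fixed point `(q, 0)`. -/
theorem stmt13 {X : Type*} [MetricSpace X] [CompactSpace X] [ConnectedSpace X]
    (d : ℕ → X) (hd : Function.Injective d)
    (s : Set (ℝ × ℝ)) (hs : (∃ m : ℕ, 1 ≤ m ∧ s = stN m) ∨ s = stOmega)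
    (h₁ : X ≃ₜ X) (p q : X)
    (hsimple : SimpleSystem h₁ p q)
    (hp : p ∉ Set.range d) (hq : q ∉ Set.range d)
    (hD : ⇑h₁ '' Set.range d = Set.range d) :
    ∃ h : ↥(combSet d s) ≃ₜ ↥(combSet d s),
      (∀ z : ↥(combSet d s), ((h z : X × (ℝ × ℝ))).1 = h₁ ((z : X × (ℝ × ℝ)).1)) ∧
      SimpleSystem h ⟨(p, 0), Or.inl ⟨hp, rfl⟩⟩ ⟨(q, 0), Or.inl ⟨hq, rfl⟩⟩ :=
  stmt13_general d hd s hs h₁ p q hsimple hp hq hD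
end
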